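/- arXiv:2010.12494 — 8 statements merged into one kernel-verified Lean document; each statement's English description precedes it below -/
import Mathlib

section
/- Let a, c, ε₁, ε₂ be real numbers, q a nonzero complex number, and W ∈ ℂ any complex number with W² = (a·q⁻¹ − c·q)² + 4ε₁ε₂. Then the characteristic polynomial of the 2×2 complex matrix A + q²·B + q⁻²·C factors as (X − λ₊)(X − λ₋), where λ₊ = (1/4)·((a·q⁻¹ + c·q) + W)² and λ₋ = (1/4)·((a·q⁻¹ + c·q) − W)²; i.e. the eigenvalues of A + q²B + q⁻²C are exactly λ₊ and λ₋ (with multiplicity). -/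
open Matrix Polynomial

/-- The matrix `A = [[ε₁ε₂, cε₂], [aε₁, ε₁ε₂]]` regarded as a complex matrix. -/
noncomputable def Amat (a c e1 e2 : ℝ) : Matrix (Fin 2) (Fin 2) ℂ :=
  !![((e1 * e2 : ℝ) : ℂ), ((c * e2 : ℝ) : ℂ); ((a * e1 : ℝ) : ℂ), ((e1 * e2 : ℝ) : ℂ)]

/-- The matrix `B = [[c², 0], [cε₁, 0]]` regarded as a complex matrix. -/
noncomputable def Bmat (a c e1 e2 : ℝ) : Matrix (Fin 2) (Fin 2) ℂ :=
  !![((c ^ 2 : ℝ) : ℂ), 0; ((c * e1 : ℝ) : ℂ), 0]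

/-- The matrix `C = [[0, aε₂], [0, a²]]` regarded as a complex matrix. -/
noncomputable def Cmat (a c e1 e2 : ℝ) : Matrix (Fin 2) (Fin 2) ℂ :=
  !![0, ((a * e2 : ℝ) : ℂ); 0, ((a ^ 2 : ℝ) : ℂ)]

lemma quad_factor (t d l1 l2 : ℂ) (h1 : t = l1 + l2) (h2 : d = l1 * l2) :
    (X : ℂ[X]) ^ 2 - C t * X + C d = (X - C l1) * (X - C l2) := by
  rw [h1, h2, Polynomial.C_add, Polynomial.C_mul]; ring

lemma my_charpoly_fin_two (M : Matrix (Fin 2) (Fin 2) ℂ) :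
    M.charpoly = X ^ 2 - C M.trace * X + C M.det := by
  rw [Matrix.charpoly, Matrix.det_fin_two, Matrix.charmatrix_apply_eq,
    Matrix.charmatrix_apply_eq, Matrix.charmatrix_apply_ne _ _ _ (by decide),
    Matrix.charmatrix_apply_ne _ _ _ (by decide), Matrix.trace_fin_two, Matrix.det_fin_two]
  simp only [map_sub, map_add, Polynomial.C_mul]
  ring

/-- for `q ≠ 0` and any `W` with `W² = (aq⁻¹ − cq)² + 4ε₁ε₂`,
the characteristic polynomial of `A + q²B + q⁻²C` factors as
`(X − λ₊)(X − λ₋)` with `λ± = ((aq⁻¹ + cq) ± W)²/4`. -/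
theorem stmt4 (a c e1 e2 : ℝ) (q : ℂ) (hq : q ≠ 0) (W : ℂ)
    (hW : W ^ 2 = ((a : ℂ) * q⁻¹ - (c : ℂ) * q) ^ 2 + 4 * (e1 : ℂ) * (e2 : ℂ)) :
    (Amat a c e1 e2 + q ^ 2 • Bmat a c e1 e2 + q ^ (-2 : ℤ) • Cmat a c e1 e2).charpoly =
      (X - Polynomial.C ((1 / 4) * (((a : ℂ) * q⁻¹ + (c : ℂ) * q) + W) ^ 2)) *
        (X - Polynomial.C ((1 / 4) * (((a : ℂ) * q⁻¹ + (c : ℂ) * q) - W) ^ 2)) := by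
  set M := Amat a c e1 e2 + q ^ 2 • Bmat a c e1 e2 + q ^ (-2 : ℤ) • Cmat a c e1 e2 with hM
  have hq2 : (q : ℂ) ^ (-2 : ℤ) = (q ^ 2)⁻¹ := by
    rw [_root_.zpow_neg]; norm_cast
  set s : ℂ := (a : ℂ) * q⁻¹ + c * q with hs
  have key1 : s ^ 2 + W ^ 2 = 2 * (a : ℂ) ^ 2 * (q ^ 2)⁻¹ + 2 * c ^ 2 * q ^ 2 + 4 * e1 * e2 := by
    rw [hW, hs]; field_simp; ring
  have key2 : s ^ 2 - W ^ 2 = 4 * (a : ℂ) * c - 4 * e1 * e2 := by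
    rw [hW, hs]; field_simp; ring
  have htr : M.trace = (1 / 4) * (s + W) ^ 2 + (1 / 4) * (s - W) ^ 2 := by
    have h2 : (1 / 4 : ℂ) * (s + W) ^ 2 + (1 / 4) * (s - W) ^ 2 = (1 / 2) * (s ^ 2 + W ^ 2) := by
      ring
    rw [h2, key1]
    simp [hM, Matrix.trace_fin_two, Amat, Bmat, Cmat, hq2]
    ring
  have hdet : M.det = ((1 / 4) * (s + W) ^ 2) * ((1 / 4) * (s - W) ^ 2) := by
    have h2 : ((1 / 4 : ℂ) * (s + W) ^ 2) * ((1 / 4) * (s - W) ^ 2)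
        = (1 / 16) * (s ^ 2 - W ^ 2) ^ 2 := by ring
    rw [h2, key2]
    simp [hM, Matrix.det_fin_two, Amat, Bmat, Cmat, hq2]
    field_simp
    ring
  rw [my_charpoly_fin_two]
  exact quad_factor _ _ _ _ htr hdet
end

section
/- Let a, c, ε₁, ε₂ be real numbers and let ω ∈ ℂ satisfy |ω| = 1. Then every eigenvalue μ ∈ ℂ of the 2×2 complex matrix A + ω·B + ω⁻¹·C satisfies |μ| ≤ λ_eff, where λ_eff = (1/4)·(|a| + |c| + √((|a| − |c|)² + 4|ε₁||ε₂|))². -/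
open Matrix

/-!
The bound is the Perron root of the nonnegative matrix dominating `A + ωB + ω⁻¹C` entrywise,
`[[|ε₁ε₂| + c², (|a| + |c|)|ε₂|], [(|a| + |c|)|ε₁|, |ε₁ε₂| + a²]]`. An eigenvalue `μ` of a
`2 × 2` matrix satisfies `(μ - m₀₀)(μ - m₁₁) = m₀₁ m₁₀`; if `|μ|` exceeded the Perron root `r`
of a dominating matrix `[[p, q], [t, s]]`, then `(|μ| - p)(|μ| - s) > (r - p)(r - s) = qt`,
contradicting the triangle inequality applied to that equation.
-/

theorem sub_mul_sub_eq_of_mem_spectrum_fin_two {K : Type*} [Field K]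
    {M : Matrix (Fin 2) (Fin 2) K} {μ : K} (hμ : μ ∈ spectrum K M) :
    (μ - M 0 0) * (μ - M 1 1) = M 0 1 * M 1 0 := by
  rw [spectrum.mem_iff, isUnit_iff_isUnit_det, isUnit_iff_ne_zero, not_not, det_fin_two] at hμ
  simp only [Matrix.sub_apply, algebraMap_matrix_apply, Algebra.algebraMap_self, RingHom.id_apply,
    ↓reduceIte, zero_ne_one, one_ne_zero, zero_sub] at hμ
  linear_combination hμ

theorem norm_le_of_sub_mul_sub_eq {𝕜 : Type*} [NormedField 𝕜] {μ d₀ d₁ b : 𝕜} {p s r : ℝ}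
    (h : (μ - d₀) * (μ - d₁) = b) (hd₀ : ‖d₀‖ ≤ p) (hd₁ : ‖d₁‖ ≤ s) (hp : p ≤ r) (hs : s ≤ r)
    (hb : ‖b‖ ≤ (r - p) * (r - s)) : ‖μ‖ ≤ r := by
  by_contra! hr
  have h₀ : ‖μ‖ - p ≤ ‖μ - d₀‖ := by linarith [norm_sub_norm_le μ d₀]
  have h₁ : ‖μ‖ - s ≤ ‖μ - d₁‖ := by linarith [norm_sub_norm_le μ d₁]
  have hμb : (‖μ‖ - p) * (‖μ‖ - s) ≤ ‖b‖ := by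
    rw [← h, norm_mul]
    exact mul_le_mul h₀ h₁ (by linarith) (norm_nonneg _)
  nlinarith

section PerronRoot

variable {A C E S : ℝ}

theorem add_sq_le_quarter_sq (hA : 0 ≤ A) (hC : 0 ≤ C) (hE : 0 ≤ E) (hS₀ : 0 ≤ S)
    (hS : S ^ 2 = (A - C) ^ 2 + 4 * E) :
    E + A ^ 2 ≤ (1 / 4) * (A + C + S) ^ 2 ∧ E + C ^ 2 ≤ (1 / 4) * (A + C + S) ^ 2 := by
  obtain ⟨hlo, hhi⟩ := abs_le_of_sq_le_sq' (a := A - C) (by linarith) hS₀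
  constructor
  · nlinarith [mul_nonneg (add_nonneg hA hC) (sub_nonneg.2 hhi)]
  · nlinarith [mul_nonneg (add_nonneg hA hC) (neg_le_iff_add_nonneg.1 hlo)]

theorem quarter_sq_sub_mul_sub_eq (hS : S ^ 2 = (A - C) ^ 2 + 4 * E) :
    ((1 / 4) * (A + C + S) ^ 2 - (E + C ^ 2)) * ((1 / 4) * (A + C + S) ^ 2 - (E + A ^ 2)) =
      E * (A + C) ^ 2 := by
  linear_combination
    ((A + C) ^ 2 / 4 + (A + C) * S / 4 + (S ^ 2 - (A - C) ^ 2 - 4 * E) / 16) * hS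

end PerronRoot

theorem norm_ofReal_add_mul_ofReal_le {ω : ℂ} (hω : ‖ω‖ = 1) (x y : ℝ) :
    ‖(x : ℂ) + ω * y‖ ≤ |x| + |y| := by
  calc ‖(x : ℂ) + ω * y‖ ≤ ‖(x : ℂ)‖ + ‖ω * y‖ := norm_add_le _ _
    _ = |x| + |y| := by rw [norm_mul, hω, one_mul, Complex.norm_real, Complex.norm_real,
      Real.norm_eq_abs, Real.norm_eq_abs]

theorem Amat_add_smul_Bmat_add_smul_Cmat_eq (a c e1 e2 : ℝ) (ω : ℂ) :
    Amat a c e1 e2 + ω • Bmat a c e1 e2 + ω⁻¹ • Cmat a c e1 e2 =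
      !![((e1 * e2 : ℝ) : ℂ) + ω * (c ^ 2 : ℝ), ((c * e2 : ℝ) : ℂ) + ω⁻¹ * (a * e2 : ℝ);
        ((a * e1 : ℝ) : ℂ) + ω * (c * e1 : ℝ), ((e1 * e2 : ℝ) : ℂ) + ω⁻¹ * (a ^ 2 : ℝ)] := by
  ext i j
  fin_cases i <;> fin_cases j <;> simp [Amat, Bmat, Cmat]

/-- for `|ω| = 1`, every eigenvalue `μ` of `A + ωB + ω⁻¹C`
satisfies `|μ| ≤ λ_eff = (|a| + |c| + √((|a|−|c|)² + 4|ε₁||ε₂|))²/4`. -/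
theorem stmt8 (a c e1 e2 : ℝ) (ω : ℂ) (hω : ‖ω‖ = 1) :
    ∀ μ ∈ spectrum ℂ (Amat a c e1 e2 + ω • Bmat a c e1 e2 + ω⁻¹ • Cmat a c e1 e2),
      ‖μ‖ ≤
        (1 / 4) * (|a| + |c| + Real.sqrt ((|a| - |c|) ^ 2 + 4 * |e1| * |e2|)) ^ 2 := by
  intro μ hμ
  rw [Amat_add_smul_Bmat_add_smul_Cmat_eq] at hμ
  have hω' : ‖ω⁻¹‖ = 1 := by rw [norm_inv, hω, inv_one]
  have hE : 0 ≤ |e1| * |e2| := by positivity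
  have hS : Real.sqrt ((|a| - |c|) ^ 2 + 4 * |e1| * |e2|) ^ 2 =
      (|a| - |c|) ^ 2 + 4 * (|e1| * |e2|) := by
    rw [Real.sq_sqrt (by positivity), mul_assoc]
  obtain ⟨hA, hC⟩ := add_sq_le_quarter_sq (abs_nonneg a) (abs_nonneg c) hE (Real.sqrt_nonneg _) hS
  refine norm_le_of_sub_mul_sub_eq (sub_mul_sub_eq_of_mem_spectrum_fin_two hμ)
    ((norm_ofReal_add_mul_ofReal_le hω _ _).trans ?_)
    ((norm_ofReal_add_mul_ofReal_le hω' _ _).trans ?_) hC hA ?_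
  · rw [abs_mul, abs_pow, sq_abs]
  · rw [abs_mul, abs_pow, sq_abs]
  rw [quarter_sq_sub_mul_sub_eq hS, norm_mul]
  refine (mul_le_mul (norm_ofReal_add_mul_ofReal_le hω' _ _)
    (norm_ofReal_add_mul_ofReal_le hω _ _) (norm_nonneg _) (by positivity)).trans (le_of_eq ?_)
  simp only [abs_mul]
  ring
end

section
/- Let a, c, ε₁, ε₂ be real numbers, let L ≥ 3 and t ≥ 1 be integers, and set λ_eff = (1/4)·(|a| + |c| + √((|a| − |c|)² + 4|ε₁||ε₂|))². Then |trace(M_L(A,B,C)^t)| ≤ 2L·λ_eff^t. -/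
open Matrix

/-- The block-circulant matrix `M_L(A,B,C)`: block `(i,j)` equals `A` if `j = i`,
`B` if `j = i + 1`, `C` if `j = i − 1` and `0` otherwise. -/
noncomputable def blockCirc (L n : ℕ) (A B C : Matrix (Fin n) (Fin n) ℂ) :
    Matrix (ZMod L × Fin n) (ZMod L × Fin n) ℂ :=
  fun p q =>
    if q.1 = p.1 then A p.2 q.2
    else if q.1 = p.1 + 1 then B p.2 q.2
    else if q.1 = p.1 - 1 then C p.2 q.2
    else 0

/-!
If `v > 0` and `∑_q ‖M p q‖ v q ≤ λ v p` for every row `p`, the same inequality holds for `M ^ t`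
with `λ ^ t`, so every diagonal entry of `M ^ t` has norm at most `λ ^ t` and
`‖tr (M ^ t)‖ ≤ 2L λ ^ t`. For a weight `v` that only depends on the position inside a block,
the weighted row sums of the block-circulant matrix are those of `|A| + |B| + |C|`, and this
matrix is exactly `K ^ 2` for `K = [[|c|, |ε₂|], [|ε₁|, |a|]]`. The Perron root of `K` is
`√λ_eff`, with eigenvector `(|ε₂|, √λ_eff - |c|)`. That eigenvector is positive only when
`ε₁ε₂ ≠ 0`, so `|εᵢ|` is replaced by `|εᵢ| + δ` and `δ → 0`.
-/

section WeightedRowSums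

variable {ι R : Type*} [Fintype ι] [DecidableEq ι] [NormedRing R] [NormOneClass R]
  {M : Matrix ι ι R} {v : ι → ℝ} {lam : ℝ}

theorem Matrix.sum_norm_pow_apply_mul_le (hv : 0 ≤ v) (hlam : 0 ≤ lam)
    (hM : ∀ p, ∑ q, ‖M p q‖ * v q ≤ lam * v p) (n : ℕ) (p : ι) :
    ∑ q, ‖(M ^ n) p q‖ * v q ≤ lam ^ n * v p := by
  induction n generalizing p with
  | zero => simp [Matrix.one_apply, apply_ite norm]
  | succ n ih =>
    calc ∑ q, ‖(M ^ n * M) p q‖ * v q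
        ≤ ∑ q, ∑ r, ‖(M ^ n) p r‖ * ‖M r q‖ * v q := by
          refine Finset.sum_le_sum fun q _ => ?_
          rw [← Finset.sum_mul, Matrix.mul_apply]
          refine mul_le_mul_of_nonneg_right ?_ (hv q)
          exact (norm_sum_le _ _).trans (Finset.sum_le_sum fun r _ => norm_mul_le _ _)
      _ = ∑ r, ‖(M ^ n) p r‖ * ∑ q, ‖M r q‖ * v q := by
          rw [Finset.sum_comm]
          simp only [Finset.mul_sum, mul_assoc]
      _ ≤ ∑ r, ‖(M ^ n) p r‖ * (lam * v r) := by gcongr; exact hM _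
      _ = lam * ∑ r, ‖(M ^ n) p r‖ * v r := by
          rw [Finset.mul_sum]
          exact Finset.sum_congr rfl fun r _ => by ring
      _ ≤ lam * (lam ^ n * v p) := by gcongr; exact ih p
      _ = lam ^ (n + 1) * v p := by ring

theorem Matrix.norm_pow_apply_self_le (hv : ∀ q, 0 < v q) (hlam : 0 ≤ lam)
    (hM : ∀ p, ∑ q, ‖M p q‖ * v q ≤ lam * v p) (n : ℕ) (p : ι) :
    ‖(M ^ n) p p‖ ≤ lam ^ n := by
  refine le_of_mul_le_mul_right ?_ (hv p)
  calc ‖(M ^ n) p p‖ * v p ≤ ∑ q, ‖(M ^ n) p q‖ * v q :=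
        Finset.single_le_sum (f := fun q => ‖(M ^ n) p q‖ * v q)
          (fun q _ => mul_nonneg (norm_nonneg _) (hv q).le) (Finset.mem_univ p)
    _ ≤ lam ^ n * v p := sum_norm_pow_apply_mul_le (fun q => (hv q).le) hlam hM n p

theorem Matrix.norm_trace_pow_le (hv : ∀ q, 0 < v q) (hlam : 0 ≤ lam)
    (hM : ∀ p, ∑ q, ‖M p q‖ * v q ≤ lam * v p) (n : ℕ) :
    ‖trace (M ^ n)‖ ≤ Fintype.card ι * lam ^ n :=
  calc ‖trace (M ^ n)‖ ≤ ∑ p, ‖(M ^ n) p p‖ := norm_sum_le _ _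
    _ ≤ ∑ _p : ι, lam ^ n := Finset.sum_le_sum fun p _ => norm_pow_apply_self_le hv hlam hM n p
    _ = Fintype.card ι * lam ^ n := by simp

end WeightedRowSums

lemma ZMod.add_one_ne_sub_one {L : ℕ} (hL : 3 ≤ L) (i : ZMod L) : i + 1 ≠ i - 1 := by
  have h2 : ((2 : ℕ) : ZMod L) ≠ 0 := by
    rw [Ne, ZMod.natCast_eq_zero_iff]
    exact fun h => absurd (Nat.le_of_dvd two_pos h) (by omega)
  intro h
  exact h2 (by push_cast; linear_combination h)

lemma norm_blockCirc_apply {L n : ℕ} (hL : 3 ≤ L) (A B C : Matrix (Fin n) (Fin n) ℂ)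
    (p q : ZMod L × Fin n) :
    ‖blockCirc L n A B C p q‖ =
      (if q.1 = p.1 then ‖A p.2 q.2‖ else 0) + (if q.1 = p.1 + 1 then ‖B p.2 q.2‖ else 0) +
        (if q.1 = p.1 - 1 then ‖C p.2 q.2‖ else 0) := by
  have : Fact (1 < L) := ⟨by omega⟩
  obtain ⟨i, r⟩ := p
  obtain ⟨j, s⟩ := q
  have hB : i + 1 ≠ i := by simp
  have hC : i - 1 ≠ i := by simp
  have hBC := ZMod.add_one_ne_sub_one hL i
  by_cases h₀ : j = i
  · subst h₀; simp [blockCirc, hB.symm, hC.symm]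
  by_cases h₁ : j = i + 1
  · subst h₁; simp [blockCirc, hB, hBC]
  by_cases h₂ : j = i - 1
  · subst h₂; simp [blockCirc, hC, hBC.symm]
  simp [blockCirc, h₀, h₁, h₂]

lemma sum_norm_blockCirc_mul {L n : ℕ} [NeZero L] (hL : 3 ≤ L) (A B C : Matrix (Fin n) (Fin n) ℂ)
    (v : Fin n → ℝ) (p : ZMod L × Fin n) :
    ∑ q, ‖blockCirc L n A B C p q‖ * v q.2 =
      ∑ s, (‖A p.2 s‖ + ‖B p.2 s‖ + ‖C p.2 s‖) * v s := by
  simp only [norm_blockCirc_apply hL, Fintype.sum_prod_type]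
  rw [Finset.sum_comm]
  simp [add_mul, Finset.sum_add_distrib, ite_mul]

theorem norm_trace_blockCirc_pow_le {L n : ℕ} [NeZero L] (hL : 3 ≤ L)
    {A B C : Matrix (Fin n) (Fin n) ℂ} {v : Fin n → ℝ} {lam : ℝ} (hv : ∀ s, 0 < v s)
    (hlam : 0 ≤ lam) (hrow : ∀ r, ∑ s, (‖A r s‖ + ‖B r s‖ + ‖C r s‖) * v s ≤ lam * v r)
    (t : ℕ) :
    ‖trace (blockCirc L n A B C ^ t)‖ ≤ L * n * lam ^ t := by
  have h := Matrix.norm_trace_pow_le (v := fun q => v q.2) (fun q => hv q.2) hlam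
    (fun p => (sum_norm_blockCirc_mul hL A B C v p).trans_le (hrow p.2)) t
  simpa using h

/-- The largest eigenvalue of `!![y, b; d, x]` when `β = b * d ≥ 0`. -/
noncomputable def perronRoot (x y β : ℝ) : ℝ := (x + y + √((x - y) ^ 2 + 4 * β)) / 2

lemma continuous_perronRoot (x y : ℝ) : Continuous (perronRoot x y) := by
  unfold perronRoot; fun_prop

lemma perronRoot_sub_pos {x y β : ℝ} (hβ : 0 < β) : 0 < perronRoot x y β - y := by
  have : |x - y| < √((x - y) ^ 2 + 4 * β) := by
    rw [← Real.sqrt_sq_eq_abs]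
    exact Real.sqrt_lt_sqrt (sq_nonneg _) (by linarith)
  unfold perronRoot
  linarith [neg_abs_le (x - y)]

lemma mulVec_perronVector (x y : ℝ) {b d : ℝ} (hbd : 0 ≤ b * d) :
    !![y, b; d, x] *ᵥ ![b, perronRoot x y (b * d) - y] =
      perronRoot x y (b * d) • ![b, perronRoot x y (b * d) - y] := by
  have hsq := Real.sq_sqrt (by positivity : 0 ≤ (x - y) ^ 2 + 4 * (b * d))
  have hμ : (perronRoot x y (b * d) - x) * (perronRoot x y (b * d) - y) = b * d := by
    unfold perronRoot
    linear_combination hsq / 4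
  ext i
  fin_cases i
  · simp [Matrix.mulVec, dotProduct, Fin.sum_univ_two]
    ring
  · simp [Matrix.mulVec, dotProduct, Fin.sum_univ_two]
    linear_combination -hμ

lemma Matrix.sum_mul_le_of_le_of_mulVec_eq {ι : Type*} [Fintype ι] {N K : Matrix ι ι ℝ}
    {v : ι → ℝ} {μ : ℝ} (hNK : ∀ r s, N r s ≤ K r s) (hv : 0 ≤ v) (hK : K *ᵥ v = μ • v)
    (r : ι) : ∑ s, N r s * v s ≤ μ * v r :=
  calc ∑ s, N r s * v s ≤ ∑ s, K r s * v s :=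
        Finset.sum_le_sum fun s _ => mul_le_mul_of_nonneg_right (hNK r s) (hv s)
    _ = μ * v r := congrFun hK r

lemma norm_Amat_add_norm_Bmat_add_norm_Cmat_le (a c e1 e2 : ℝ) {b d : ℝ} (hb : |e2| ≤ b)
    (hd : |e1| ≤ d) (r s : Fin 2) :
    ‖Amat a c e1 e2 r s‖ + ‖Bmat a c e1 e2 r s‖ + ‖Cmat a c e1 e2 r s‖ ≤
      (!![|c|, b; d, |a|] * !![|c|, b; d, |a|]) r s := by
  have := abs_nonneg a
  have := abs_nonneg c
  have := abs_nonneg e1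
  have := abs_nonneg e2
  fin_cases r <;> fin_cases s <;>
    simp [Amat, Bmat, Cmat, Matrix.mul_apply, Fin.sum_univ_two] <;> nlinarith

theorem norm_trace_pow_le_perronRoot_sq (a c e1 e2 : ℝ) {L : ℕ} [NeZero L] (hL : 3 ≤ L)
    {b d : ℝ} (hb : |e2| ≤ b) (hd : |e1| ≤ d) (hb0 : 0 < b) (hd0 : 0 < d) (t : ℕ) :
    ‖trace (blockCirc L 2 (Amat a c e1 e2) (Bmat a c e1 e2) (Cmat a c e1 e2) ^ t)‖ ≤
      2 * L * (perronRoot |a| |c| (b * d) ^ 2) ^ t := by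
  set K := !![|c|, b; d, |a|]
  set μ := perronRoot |a| |c| (b * d)
  set v := ![b, μ - |c|]
  have hK : K *ᵥ v = μ • v := mulVec_perronVector |a| |c| (mul_pos hb0 hd0).le
  have hK2 : (K * K) *ᵥ v = μ ^ 2 • v := by
    rw [← Matrix.mulVec_mulVec, hK, Matrix.mulVec_smul, hK, smul_smul, sq]
  have hv : ∀ s, 0 < v s := Fin.forall_fin_two.2 ⟨hb0, perronRoot_sub_pos (mul_pos hb0 hd0)⟩
  have hrow := Matrix.sum_mul_le_of_le_of_mulVec_eq
    (norm_Amat_add_norm_Bmat_add_norm_Cmat_le a c e1 e2 hb hd) (fun s => (hv s).le) hK2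
  simpa [mul_comm] using norm_trace_blockCirc_pow_le hL hv (sq_nonneg μ) hrow t

theorem stmt9_general (a c e1 e2 : ℝ) (L t : ℕ) [NeZero L] (hL : 3 ≤ L) :
    ‖(Matrix.trace (blockCirc L 2 (Amat a c e1 e2) (Bmat a c e1 e2) (Cmat a c e1 e2) ^ t))‖ ≤
      2 * L * ((1 / 4) * (|a| + |c| + Real.sqrt ((|a| - |c|) ^ 2 + 4 * |e1| * |e2|)) ^ 2) ^ t := by
  set bound : ℝ → ℝ := fun ε => 2 * L * (perronRoot |a| |c| ((|e2| + ε) * (|e1| + ε)) ^ 2) ^ t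
  have hbound : ∀ ε > 0, ‖trace (blockCirc L 2 (Amat a c e1 e2) (Bmat a c e1 e2)
      (Cmat a c e1 e2) ^ t)‖ ≤ bound ε := fun ε hε =>
    norm_trace_pow_le_perronRoot_sq a c e1 e2 hL (le_add_of_nonneg_right hε.le)
      (le_add_of_nonneg_right hε.le) (by positivity) (by positivity) t
  have hcont : Continuous bound := by
    have := continuous_perronRoot |a| |c|
    fun_prop
  have hlim : Filter.Tendsto bound (nhdsWithin 0 (Set.Ioi 0)) (nhds (bound 0)) :=
    hcont.continuousAt.continuousWithinAt
  refine (ge_of_tendsto hlim (eventually_nhdsWithin_of_forall hbound)).trans_eq ?_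
  show 2 * (L : ℝ) * (perronRoot |a| |c| ((|e2| + 0) * (|e1| + 0)) ^ 2) ^ t = _
  rw [perronRoot, add_zero, add_zero, mul_comm |e2|, ← mul_assoc]
  ring

/-- `|trace(M_L(A,B,C)^t)| ≤ 2L·λ_eff^t` with
`λ_eff = (|a| + |c| + √((|a|−|c|)² + 4|ε₁||ε₂|))²/4`. -/
theorem stmt9 (a c e1 e2 : ℝ) (L t : ℕ) [NeZero L] (hL : 3 ≤ L) (ht : 1 ≤ t) :
    ‖(Matrix.trace (blockCirc L 2 (Amat a c e1 e2) (Bmat a c e1 e2) (Cmat a c e1 e2) ^ t))‖ ≤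
      2 * L * ((1 / 4) * (|a| + |c| + Real.sqrt ((|a| - |c|) ^ 2 + 4 * |e1| * |e2|)) ^ 2) ^ t :=
  stmt9_general a c e1 e2 L t hL
end

section
/- For every real number α ≥ 1: 0 ≤ Σ_{n ∈ ℤ} exp(−α·n²) − 1 − 2·exp(−α) ≤ 3·exp(−4α). -/
/-!
Splitting off the terms `n = 0, ±1`, the theta sum equals `1 + 2e^{-α} + 2T` with
`T = Σ_{n ≥ 0} e^{-α(n+2)²}`. Since `(n+2)² ≥ 4(n+1)`, the tail `T` is dominated by the geometric
series `Σ_{n ≥ 0} q^{n+1} = q/(1-q)` with `q = e^{-4α}`, and `q ≤ 1/3` for `α ≥ 1` gives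
`2q/(1-q) ≤ 3q`.
-/

open Real

lemma tsum_int_eq_of_even {f : ℤ → ℝ} (hf : f.Even) (hs : Summable f) :
    ∑' n : ℤ, f n = f 0 + 2 * f 1 + 2 * ∑' n : ℕ, f (n + 2) := by
  have hnat : Summable fun n : ℕ => f n := (summable_int_iff_summable_nat_and_neg.mp hs).1
  have h := tsum_nat_add_neg hs
  simp only [hf _, ← two_mul, tsum_mul_left, ← hnat.sum_add_tsum_nat_add 2,
    Finset.sum_range_succ, Finset.sum_range_zero] at h
  push_cast at h
  linarith

section Gaussian

variable {α : ℝ}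

lemma exp_neg_mul_sq_le_pow (hα : 0 ≤ α) (n : ℕ) :
    exp (-α * (n : ℝ) ^ 2) ≤ exp (-α) ^ n := by
  rw [← exp_nat_mul, exp_le_exp]
  have : (n : ℝ) ≤ (n : ℝ) ^ 2 := mod_cast Nat.le_self_pow two_ne_zero n
  nlinarith

lemma summable_exp_neg_mul_sq_int (hα : 0 < α) :
    Summable fun n : ℤ => exp (-α * (n : ℝ) ^ 2) := by
  have hnat : Summable fun n : ℕ => exp (-α * (n : ℝ) ^ 2) :=
    (summable_geometric_of_lt_one (exp_pos _).le (exp_lt_one_iff.2 (by linarith))).of_nonneg_of_le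
      (fun n => (exp_pos _).le) (exp_neg_mul_sq_le_pow hα.le)
  refine .of_nat_of_neg ?_ ?_ <;> simpa using hnat

lemma exp_neg_mul_add_two_sq_le_pow (hα : 0 ≤ α) (n : ℕ) :
    exp (-α * ((n : ℝ) + 2) ^ 2) ≤ exp (-4 * α) ^ (n + 1) := by
  rw [← exp_nat_mul, exp_le_exp]
  push_cast
  nlinarith [mul_nonneg hα (sq_nonneg (n : ℝ))]

lemma tsum_exp_neg_mul_add_two_sq_le (hα : 0 < α) :
    ∑' n : ℕ, exp (-α * ((n : ℝ) + 2) ^ 2) ≤ exp (-4 * α) / (1 - exp (-4 * α)) := by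
  set q := exp (-4 * α)
  have hq1 : q < 1 := exp_lt_one_iff.2 (by linarith)
  have hgeo : HasSum (fun n : ℕ => q ^ (n + 1)) (q / (1 - q)) := by
    simpa only [pow_succ', div_eq_mul_inv] using
      (hasSum_geometric_of_lt_one (exp_pos _).le hq1).mul_left q
  have hbound := exp_neg_mul_add_two_sq_le_pow hα.le
  exact hasSum_le hbound
    (hgeo.summable.of_nonneg_of_le (fun n => (exp_pos _).le) hbound).hasSum hgeo

lemma exp_neg_four_mul_le_one_third (hα : 1 ≤ α) : exp (-4 * α) ≤ 1 / 3 := by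
  have h5 : 5 ≤ exp 4 := by linarith [add_one_le_exp (4 : ℝ)]
  calc exp (-4 * α) ≤ exp (-4) := exp_le_exp.2 (by linarith)
    _ = (exp 4)⁻¹ := exp_neg 4
    _ ≤ 1 / 3 := by rw [one_div]; gcongr; linarith

end Gaussian

/-- for `α ≥ 1`, the Gaussian theta sum satisfies
`0 ≤ Σ_{n ∈ ℤ} exp(−αn²) − 1 − 2exp(−α) ≤ 3exp(−4α)`. -/
theorem stmt13 (α : ℝ) (hα : 1 ≤ α) :
    0 ≤ (∑' n : ℤ, Real.exp (-α * (n : ℝ) ^ 2)) - 1 - 2 * Real.exp (-α)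
    ∧ (∑' n : ℤ, Real.exp (-α * (n : ℝ) ^ 2)) - 1 - 2 * Real.exp (-α)
        ≤ 3 * Real.exp (-4 * α) := by
  have hα0 : 0 < α := by linarith
  have hsplit := tsum_int_eq_of_even (fun n => by simp) (summable_exp_neg_mul_sq_int hα0)
  simp only [Int.cast_zero, Int.cast_one, Int.cast_add, Int.cast_natCast, Int.cast_ofNat] at hsplit
  set T := ∑' n : ℕ, exp (-α * ((n : ℝ) + 2) ^ 2)
  set q := exp (-4 * α)
  have hT : 0 ≤ T := tsum_nonneg fun n => (exp_pos _).le
  have hq : q ≤ 1 / 3 := exp_neg_four_mul_le_one_third hα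
  have hTq : 2 * T ≤ 3 * q := by
    have h1q : 0 < 1 - q := by linarith
    have := tsum_exp_neg_mul_add_two_sq_le hα0
    rw [le_div_iff₀ h1q] at this
    nlinarith [exp_pos (-4 * α)]
  simp only [hsplit, zero_pow two_ne_zero, mul_zero, exp_zero, one_pow, mul_one]
  constructor <;> linarith
end

section
/- Let D, t, L be positive real numbers and set α = 4π²Dt/L². If α ≥ 1, then 0 ≤ (1/√(4πtD)) · Σ_{w ∈ ℤ} exp(−w²L²/(4Dt)) − (1/L)·(1 + 2·exp(−α)) ≤ (3/L)·exp(−4α). -/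
open Real

/-!
Poisson summation (Jacobi's theta transformation) turns the winding sum of Gaussians of width
`√(Dt)` into `(1/L) ∑_{n ∈ ℤ} e^{-α n²}`. The terms `n = 0, ±1` give `(1/L)(1 + 2e^{-α})`, and since
`(n + 2)² ≥ 4(n + 1)` the remaining terms are dominated by the geometric series in `e^{-4α}`,
whose sum is at most `(3/2) e^{-4α}` as soon as `e^{-4α} ≤ 1/3`.
-/

theorem tsum_exp_neg_mul_int_sq_eq_sqrt {c : ℝ} (hc : 0 < c) :
    ∑' n : ℤ, exp (-(c * (n : ℝ) ^ 2)) = √(π / c) * ∑' n : ℤ, exp (-(π ^ 2 / c * (n : ℝ) ^ 2)) := by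
  have hca : 0 < c / π := div_pos hc pi_pos
  have h := tsum_exp_neg_mul_int_sq hca
  rw [← sqrt_eq_rpow, one_div, ← sqrt_inv, inv_div] at h
  convert h using 5 with n n
  · field_simp
  · field_simp

section ThetaTail

variable {α : ℝ}

theorem exp_neg_mul_nat_add_two_sq_le (hα : 0 ≤ α) (n : ℕ) :
    exp (-(α * ((n : ℝ) + 2) ^ 2)) ≤ exp (-(4 * α)) ^ (n + 1) := by
  rw [← exp_nat_mul, exp_le_exp]
  push_cast
  nlinarith [mul_nonneg hα (sq_nonneg (n : ℝ))]

theorem summable_exp_neg_mul_nat_add_two_sq (hα : 0 < α) :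
    Summable fun n : ℕ => exp (-(α * ((n : ℝ) + 2) ^ 2)) := by
  refine Summable.of_nonneg_of_le (fun _ => (exp_pos _).le) (exp_neg_mul_nat_add_two_sq_le hα.le)
    ((summable_nat_add_iff 1).2 (summable_geometric_of_lt_one (exp_pos _).le ?_))
  exact exp_lt_one_iff.2 (by linarith)

theorem tsum_exp_neg_mul_int_sq_eq (hα : 0 < α) :
    ∑' n : ℤ, exp (-(α * (n : ℝ) ^ 2)) =
      1 + 2 * exp (-α) + 2 * ∑' n : ℕ, exp (-(α * ((n : ℝ) + 2) ^ 2)) := by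
  have h : Summable fun n : ℕ => exp (-(α * ((n : ℝ) + 1) ^ 2)) := by
    refine (summable_nat_add_iff 1).1 ?_
    simpa [add_assoc, one_add_one_eq_two] using summable_exp_neg_mul_nat_add_two_sq hα
  rw [tsum_of_add_one_of_neg_add_one (by simpa using h) (by convert h using 3; push_cast; ring)]
  simp only [Int.cast_neg, neg_sq]
  push_cast
  rw [h.tsum_eq_zero_add]
  norm_num [add_assoc, one_add_one_eq_two]
  ring

theorem tsum_exp_neg_mul_nat_add_two_sq_le (hα : log 3 ≤ 4 * α) :
    ∑' n : ℕ, exp (-(α * ((n : ℝ) + 2) ^ 2)) ≤ 3 / 2 * exp (-(4 * α)) := by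
  have hα0 : 0 < α := by linarith [log_pos (by norm_num : (1 : ℝ) < 3)]
  set r := exp (-(4 * α))
  have hr0 : 0 ≤ r := (exp_pos _).le
  have hr : r ≤ 1 / 3 := by
    calc r ≤ exp (-log 3) := exp_le_exp.2 (by linarith)
      _ = 1 / 3 := by rw [exp_neg, exp_log (by norm_num), one_div]
  have hgeom : HasSum (fun n : ℕ => r ^ (n + 1)) (r / (1 - r)) := by
    simpa [pow_succ, div_eq_inv_mul] using
      (hasSum_geometric_of_lt_one hr0 (by linarith)).mul_right r
  calc ∑' n : ℕ, exp (-(α * ((n : ℝ) + 2) ^ 2)) ≤ r / (1 - r) :=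
        (summable_exp_neg_mul_nat_add_two_sq hα0).tsum_le_of_sum_le fun s =>
          (Finset.sum_le_sum fun n _ => exp_neg_mul_nat_add_two_sq_le hα0.le n).trans
            (sum_le_hasSum s (fun n _ => pow_nonneg hr0 _) hgeom)
    _ ≤ 3 / 2 * r := by
        rw [div_le_iff₀ (by linarith)]
        nlinarith

end ThetaTail

theorem winding_sum_eq (D t L : ℝ) (hD : 0 < D) (ht : 0 < t) (hL : 0 < L) :
    (1 / √(4 * π * t * D)) * ∑' w : ℤ, exp (-((w : ℝ) ^ 2 * L ^ 2) / (4 * D * t)) =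
      (1 / L) * ∑' n : ℤ, exp (-(4 * π ^ 2 * D * t / L ^ 2 * (n : ℝ) ^ 2)) := by
  have hc : 0 < L ^ 2 / (4 * D * t) := by positivity
  have hsqrt : √(π / (L ^ 2 / (4 * D * t))) = √(4 * π * t * D) / L := by
    rw [← sqrt_sq hL.le, ← sqrt_div' _ (sq_nonneg L), sqrt_sq hL.le]
    congr 1
    field_simp
  calc (1 / √(4 * π * t * D)) * ∑' w : ℤ, exp (-((w : ℝ) ^ 2 * L ^ 2) / (4 * D * t))
      = (1 / √(4 * π * t * D)) * ∑' w : ℤ, exp (-(L ^ 2 / (4 * D * t) * (w : ℝ) ^ 2)) := by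
        congr 2 with w
        ring_nf
    _ = (1 / L) * ∑' n : ℤ, exp (-(4 * π ^ 2 * D * t / L ^ 2 * (n : ℝ) ^ 2)) := by
        rw [tsum_exp_neg_mul_int_sq_eq_sqrt hc, hsqrt, ← mul_assoc]
        congr 1
        · field_simp
        · congr 1 with n
          field_simp

/-- for `D, t, L > 0` with `α = 4π²Dt/L² ≥ 1`, the winding sum of
diffusive Gaussians relaxes to `(1/L)(1 + 2e^{−α})` with error at most `(3/L)e^{−4α}`. -/
theorem stmt14 (D t L : ℝ) (hD : 0 < D) (ht : 0 < t) (hL : 0 < L)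
    (hα : 1 ≤ 4 * π ^ 2 * D * t / L ^ 2) :
    0 ≤ (1 / Real.sqrt (4 * π * t * D)) *
          (∑' w : ℤ, Real.exp (-((w : ℝ) ^ 2 * L ^ 2) / (4 * D * t)))
        - (1 / L) * (1 + 2 * Real.exp (-(4 * π ^ 2 * D * t / L ^ 2)))
    ∧ (1 / Real.sqrt (4 * π * t * D)) *
          (∑' w : ℤ, Real.exp (-((w : ℝ) ^ 2 * L ^ 2) / (4 * D * t)))
        - (1 / L) * (1 + 2 * Real.exp (-(4 * π ^ 2 * D * t / L ^ 2)))
        ≤ (3 / L) * Real.exp (-4 * (4 * π ^ 2 * D * t / L ^ 2)) := by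
  rw [winding_sum_eq D t L hD ht hL, tsum_exp_neg_mul_int_sq_eq (by linarith), neg_mul]
  set α := 4 * π ^ 2 * D * t / L ^ 2
  set tail := ∑' n : ℕ, exp (-(α * ((n : ℝ) + 2) ^ 2))
  have hlog3 : log 3 ≤ 4 * α := by linarith [log_le_sub_one_of_pos (by norm_num : (0 : ℝ) < 3)]
  have htail_le : tail ≤ 3 / 2 * exp (-(4 * α)) := tsum_exp_neg_mul_nat_add_two_sq_le hlog3
  have hexcess : 1 / L * (1 + 2 * exp (-α) + 2 * tail) - 1 / L * (1 + 2 * exp (-α)) =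
      2 / L * tail := by ring
  rw [hexcess]
  refine ⟨by positivity, ?_⟩
  calc 2 / L * tail ≤ 2 / L * (3 / 2 * exp (-(4 * α))) := by gcongr
    _ = 3 / L * exp (-(4 * α)) := by ring
end

section
/- Let a, c, ε₁, ε₂ be real numbers, let L ≥ 3 and t ≥ 1 be integers, set q_m = exp(iπm/L) for 0 ≤ m ≤ L−1, and for each m choose any W_m ∈ ℂ with W_m² = (a·q_m⁻¹ − c·q_m)² + 4ε₁ε₂. Then trace(M_L(A,B,C)^t) = Σ_{m=0}^{L−1} [ ((a·q_m⁻¹ + c·q_m + W_m)²/4)^t + ((a·q_m⁻¹ + c·q_m − W_m)²/4)^t ]. -/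
open Matrix

/-!
The discrete Fourier transform in the cyclic block index conjugates `M_L(A,B,C)` to the block
diagonal matrix with blocks `N_m = A + ω^m B + ω^(-m) C`, `ω = exp(2πi/L)`, so
`trace (M_L^t) = ∑ₘ trace (N_mᵗ)`. For the given `A, B, C`, writing `ω^m = q_m²`,
`N_m` has trace `λ₊ + λ₋` and determinant `λ₊ λ₋` with `λ± = ((a q_m⁻¹ + c q_m ± W_m) / 2)²`,
and by Cayley–Hamilton a `2 × 2` matrix with these trace and determinant satisfies
`trace (Nᵗ) = λ₊ᵗ + λ₋ᵗ`.
-/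

open scoped Kronecker

namespace Matrix

lemma trace_pow_eq_of_mul_eq_mul {ι R : Type*} [Fintype ι] [DecidableEq ι] [CommSemiring R]
    {M D V V' : Matrix ι ι R} (hV : V' * V = 1) (h : M * V = V * D) (t : ℕ) :
    trace (M ^ t) = trace (D ^ t) := by
  have ht : M ^ t * V = V * D ^ t := (SemiconjBy.pow_right h.symm t).symm
  calc trace (M ^ t) = trace (M ^ t * V * V') := by
        rw [mul_assoc, mul_eq_one_comm.mp hV, mul_one]
    _ = trace (D ^ t * (V' * V)) := by rw [ht, mul_assoc, trace_mul_comm, mul_assoc]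
    _ = trace (D ^ t) := by rw [hV, mul_one]

lemma trace_pow_reindex_blockDiagonal {ι κ R : Type*} [Fintype ι] [DecidableEq ι] [Fintype κ]
    [DecidableEq κ] [CommSemiring R] (N : ι → Matrix κ κ R) (t : ℕ) :
    trace (reindex (Equiv.prodComm κ ι) (Equiv.prodComm κ ι) (blockDiagonal N) ^ t) =
      ∑ i, trace (N i ^ t) := by
  have trace_reindex (X : Matrix (κ × ι) (κ × ι) R) :
      trace (reindex (Equiv.prodComm κ ι) (Equiv.prodComm κ ι) X) = trace X :=
    Fintype.sum_equiv (Equiv.prodComm κ ι).symm _ _ fun _ => rfl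
  rw [← coe_reindexAlgEquiv R R, ← map_pow, coe_reindexAlgEquiv, trace_reindex,
    ← blockDiagonal_pow, trace_blockDiagonal]
  rfl

section FinTwo

variable {R : Type*} [CommRing R]

lemma sq_eq_trace_smul_sub_det_smul (N : Matrix (Fin 2) (Fin 2) R) :
    N ^ 2 = trace N • N - det N • 1 := by
  ext i j
  fin_cases i <;> fin_cases j <;> simp [sq, mul_apply, trace_fin_two, det_fin_two] <;> ring

lemma trace_pow_fin_two_of_trace_det {N : Matrix (Fin 2) (Fin 2) R} {x y : R}
    (htr : trace N = x + y) (hdet : det N = x * y) (t : ℕ) :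
    trace (N ^ t) = x ^ t + y ^ t := by
  induction t using Nat.twoStepInduction with
  | zero => simp [one_add_one_eq_two]
  | one => simpa using htr
  | more t ih₀ ih₁ =>
    have hrec : N ^ (t + 2) = trace N • N ^ (t + 1) - det N • N ^ t := by
      rw [pow_add, sq_eq_trace_smul_sub_det_smul, mul_sub, mul_smul_comm, mul_smul_comm, mul_one,
        ← pow_succ]
    rw [hrec, trace_sub, trace_smul, trace_smul, ih₀, ih₁, htr, hdet, smul_eq_mul, smul_eq_mul]
    ring

end FinTwo

end Matrix

namespace ZMod

variable {L : ℕ} [NeZero L]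

lemma stdAddChar_natCast_eq_sq (m : ℕ) :
    stdAddChar (m : ZMod L) = Complex.exp (Real.pi * Complex.I * m / L) ^ 2 := by
  rw [stdAddChar_apply, toCircle_natCast, ← Complex.exp_nat_mul]
  ring_nf

lemma sum_univ_eq_sum_range {M : Type*} [AddCommMonoid M] (f : ZMod L → M) :
    ∑ m, f m = ∑ k ∈ Finset.range L, f k :=
  Finset.sum_nbij' val Nat.cast (by simp [val_lt]) (by simp)
    (by simp) (fun k hk => val_natCast_of_lt (Finset.mem_range.mp hk)) (by simp)

end ZMod

namespace BlockCirculant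

open ZMod

variable {L n : ℕ}

noncomputable def shiftMatrix (k : ZMod L) : Matrix (ZMod L) (ZMod L) ℂ :=
  of fun i j => if j = i + k then 1 else 0

noncomputable def symbol (A B C : Matrix (Fin n) (Fin n) ℂ) (z : ℂ) : Matrix (Fin n) (Fin n) ℂ :=
  A + z • B + z⁻¹ • C

lemma blockCirc_eq_kronecker (hL : 3 ≤ L) (A B C : Matrix (Fin n) (Fin n) ℂ) :
    blockCirc L n A B C =
      1 ⊗ₖ A + shiftMatrix 1 ⊗ₖ B + shiftMatrix (-1) ⊗ₖ C := by
  -- `3 ≤ L` makes the offsets `0, 1, -1` distinct, so the cases of `blockCirc` do not overlap.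
  have one_ne_zero' : (1 : ZMod L) ≠ 0 := by
    have : Fact (1 < L) := ⟨by omega⟩
    exact one_ne_zero
  have one_ne_neg_one : (1 : ZMod L) ≠ -1 := by
    rw [Ne, eq_neg_iff_add_eq_zero, one_add_one_eq_two, ← Nat.cast_ofNat,
      ZMod.natCast_eq_zero_iff]
    exact fun h => absurd (Nat.le_of_dvd two_pos h) (by omega)
  ext ⟨i, r⟩ ⟨j, s⟩
  simp only [blockCirc, Matrix.add_apply, kroneckerMap_apply, one_apply, shiftMatrix, of_apply,
    ← sub_eq_add_neg]
  by_cases h₀ : j = i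
  · subst h₀; simp [one_ne_zero', sub_eq_add_neg]
  by_cases h₁ : j = i + 1
  · subst h₁; simp [one_ne_zero', sub_eq_add_neg, one_ne_neg_one]
  by_cases h₂ : j = i - 1
  · subst h₂; simp [one_ne_zero', sub_eq_add_neg, one_ne_neg_one.symm]
  simp [h₀, h₁, h₂, Ne.symm h₀]

variable [NeZero L]

noncomputable def dftMatrix (L : ℕ) [NeZero L] : Matrix (ZMod L) (ZMod L) ℂ :=
  of fun j k => stdAddChar (j * k)

noncomputable def invDftMatrix (L : ℕ) [NeZero L] : Matrix (ZMod L) (ZMod L) ℂ :=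
  of fun j k => stdAddChar (-(j * k)) / L

lemma invDftMatrix_mul_dftMatrix : invDftMatrix L * dftMatrix L = 1 := by
  ext i k
  have hL : (L : ℂ) ≠ 0 := NeZero.ne _
  have h : ∀ j : ZMod L, stdAddChar (-(i * j)) / L * stdAddChar (j * k) =
      stdAddChar (j * (k - i)) / L := fun j => by
    rw [div_mul_eq_mul_div, ← AddChar.map_add_eq_mul]; ring_nf
  rw [mul_apply]
  simp only [invDftMatrix, dftMatrix, of_apply, h]
  rw [← Finset.sum_div, AddChar.sum_mulShift _ (isPrimitive_stdAddChar L)]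
  by_cases hik : i = k
  · simp [hik, hL, one_apply]
  · simp [hik, sub_eq_zero, Ne.symm hik]

lemma shiftMatrix_mul_dftMatrix (k : ZMod L) :
    shiftMatrix k * dftMatrix L = dftMatrix L * diagonal fun m => stdAddChar (k * m) := by
  ext i m
  simp [mul_apply, shiftMatrix, dftMatrix, diagonal, add_mul, AddChar.map_add_eq_mul]

lemma trace_blockCirc_pow (hL : 3 ≤ L) (A B C : Matrix (Fin n) (Fin n) ℂ) (t : ℕ) :
    trace (blockCirc L n A B C ^ t) = ∑ m : ZMod L, trace (symbol A B C (stdAddChar m) ^ t) := by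
  set V : Matrix (ZMod L × Fin n) (ZMod L × Fin n) ℂ := dftMatrix L ⊗ₖ 1
  have hV : invDftMatrix L ⊗ₖ (1 : Matrix (Fin n) (Fin n) ℂ) * V = 1 := by
    rw [← mul_kronecker_mul, invDftMatrix_mul_dftMatrix, one_mul, one_kronecker_one]
  have hD : 1 ⊗ₖ A + diagonal (fun m : ZMod L => stdAddChar (1 * m)) ⊗ₖ B
      + diagonal (fun m : ZMod L => stdAddChar (-1 * m)) ⊗ₖ C =
      reindex (Equiv.prodComm _ _) (Equiv.prodComm _ _)
        (blockDiagonal fun m => symbol A B C (stdAddChar m)) := by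
    ext ⟨i, r⟩ ⟨j, s⟩
    by_cases hij : i = j <;>
      simp [hij, symbol, one_apply, diagonal, blockDiagonal_apply, AddChar.map_neg_eq_inv]
  have hconj : blockCirc L n A B C * V = V * reindex (Equiv.prodComm _ _) (Equiv.prodComm _ _)
      (blockDiagonal fun m => symbol A B C (stdAddChar m)) := by
    rw [blockCirc_eq_kronecker hL, ← hD]
    simp only [V, add_mul, mul_add, ← mul_kronecker_mul, shiftMatrix_mul_dftMatrix, one_mul,
      mul_one]
  rw [trace_pow_eq_of_mul_eq_mul hV hconj, trace_pow_reindex_blockDiagonal]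

variable (a c e1 e2 : ℝ)

lemma trace_symbol (z : ℂ) :
    trace (symbol (Amat a c e1 e2) (Bmat a c e1 e2) (Cmat a c e1 e2) z) =
      2 * (e1 * e2) + z * c ^ 2 + z⁻¹ * a ^ 2 := by
  simp [symbol, Amat, Bmat, Cmat, trace_fin_two]
  ring

lemma det_symbol {z : ℂ} (hz : z ≠ 0) :
    det (symbol (Amat a c e1 e2) (Bmat a c e1 e2) (Cmat a c e1 e2) z) =
      (e1 * e2 - a * c) ^ 2 := by
  simp [symbol, Amat, Bmat, Cmat, det_fin_two]
  field_simp
  ring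

lemma trace_pow_symbol_sq {q W : ℂ} (hq : q ≠ 0)
    (hW : W ^ 2 = (a * q⁻¹ - c * q) ^ 2 + 4 * e1 * e2) (t : ℕ) :
    trace (symbol (Amat a c e1 e2) (Bmat a c e1 e2) (Cmat a c e1 e2) (q ^ 2) ^ t) =
      ((a * q⁻¹ + c * q + W) ^ 2 / 4) ^ t + ((a * q⁻¹ + c * q - W) ^ 2 / 4) ^ t := by
  have hqq : q * q⁻¹ = 1 := mul_inv_cancel₀ hq
  refine trace_pow_fin_two_of_trace_det ?_ ?_ t
  · rw [trace_symbol, ← inv_pow]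
    linear_combination -hW / 2
  · rw [det_symbol _ _ _ _ (pow_ne_zero 2 hq)]
    -- with `s = a q⁻¹ + c q`, the product is `((s² - W²) / 4)²` and `s² - W² = 4 (a c - e1 e2)`
    linear_combination
      ((2 * (a * q⁻¹ + c * q) ^ 2 - ((a * q⁻¹ - c * q) ^ 2 + 4 * e1 * e2) - W ^ 2) / 16) * hW
        + (a * c * (2 * e1 * e2 - a * c * (1 + q * q⁻¹))) * hqq

end BlockCirculant

open BlockCirculant in
theorem stmt16_general (a c e1 e2 : ℝ) (L t : ℕ) [NeZero L] (hL : 3 ≤ L)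
    (W : ℕ → ℂ)
    (hW : ∀ m < L, (W m) ^ 2 =
      ((a : ℂ) * (Complex.exp (Real.pi * Complex.I * m / L))⁻¹
          - (c : ℂ) * Complex.exp (Real.pi * Complex.I * m / L)) ^ 2
        + 4 * (e1 : ℂ) * (e2 : ℂ)) :
    Matrix.trace (blockCirc L 2 (Amat a c e1 e2) (Bmat a c e1 e2) (Cmat a c e1 e2) ^ t) =
      ∑ m ∈ Finset.range L,
        ((((a : ℂ) * (Complex.exp (Real.pi * Complex.I * m / L))⁻¹
              + (c : ℂ) * Complex.exp (Real.pi * Complex.I * m / L) + W m) ^ 2 / 4) ^ t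
          + (((a : ℂ) * (Complex.exp (Real.pi * Complex.I * m / L))⁻¹
              + (c : ℂ) * Complex.exp (Real.pi * Complex.I * m / L) - W m) ^ 2 / 4) ^ t) := by
  rw [trace_blockCirc_pow hL, ZMod.sum_univ_eq_sum_range]
  refine Finset.sum_congr rfl fun m hm => ?_
  rw [ZMod.stdAddChar_natCast_eq_sq]
  exact trace_pow_symbol_sq a c e1 e2 (Complex.exp_ne_zero _) (hW m (Finset.mem_range.mp hm)) t

/-- with `q_m = exp(iπm/L)` and any `W_m` with
`W_m² = (aq_m⁻¹ − cq_m)² + 4ε₁ε₂`, the trace of `M_L(A,B,C)^t` equals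
`Σ_m ((aq_m⁻¹ + cq_m + W_m)²/4)^t + ((aq_m⁻¹ + cq_m − W_m)²/4)^t`. -/
theorem stmt16 (a c e1 e2 : ℝ) (L t : ℕ) [NeZero L] (hL : 3 ≤ L) (ht : 1 ≤ t)
    (W : ℕ → ℂ)
    (hW : ∀ m < L, (W m) ^ 2 =
      ((a : ℂ) * (Complex.exp (Real.pi * Complex.I * m / L))⁻¹
          - (c : ℂ) * Complex.exp (Real.pi * Complex.I * m / L)) ^ 2
        + 4 * (e1 : ℂ) * (e2 : ℂ)) :
    Matrix.trace (blockCirc L 2 (Amat a c e1 e2) (Bmat a c e1 e2) (Cmat a c e1 e2) ^ t) =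
      ∑ m ∈ Finset.range L,
        ((((a : ℂ) * (Complex.exp (Real.pi * Complex.I * m / L))⁻¹
              + (c : ℂ) * Complex.exp (Real.pi * Complex.I * m / L) + W m) ^ 2 / 4) ^ t
          + (((a : ℂ) * (Complex.exp (Real.pi * Complex.I * m / L))⁻¹
              + (c : ℂ) * Complex.exp (Real.pi * Complex.I * m / L) - W m) ^ 2 / 4) ^ t) :=
  stmt16_general a c e1 e2 L t hL W hW
end

section
/- Let L ≥ 2 and t ≥ 1 be integers, let a, c, g be real numbers, and take the gate parameters ε₁ = ε₂ = b = d = e = f = 0 in the brickwork transfer matrix construction. Set o = gcd(t, L), ℓ = lcm(t, L), and κ = (t/o)·(L/o). Then trace(𝕋^t) = Σ_{n=0}^{o} Σ_{m=0}^{o} binom(o,n)·binom(o,m)·a^{2ℓn − 2κnm}·c^{2ℓm − 2κnm}·g^{2κnm} (all exponents are nonnegative integers since κ·m ≤ ℓ and κ·n ≤ ℓ). -/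
open Matrix BigOperators

/-- The reduced two-site gate `w` with the 9 parameters
`ε₁, ε₂, a, b, c, d, e, f, g`.  The first argument is the output pair,
the second the input pair (both in `{0,1} × {0,1}`), and all remaining
entries vanish. -/
noncomputable def gateW (e1 e2 a b c d e f g : ℝ)
    (r s : Fin 2 × Fin 2) : ℝ :=
  if r = (0, 0) ∧ s = (0, 0) then 1
  else if r = (0, 1) ∧ s = (0, 1) then e1
  else if r = (0, 1) ∧ s = (1, 0) then a
  else if r = (0, 1) ∧ s = (1, 1) then b
  else if r = (1, 0) ∧ s = (0, 1) then c
  else if r = (1, 0) ∧ s = (1, 0) then e2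
  else if r = (1, 0) ∧ s = (1, 1) then d
  else if r = (1, 1) ∧ s = (0, 1) then e
  else if r = (1, 1) ∧ s = (1, 0) then f
  else if r = (1, 1) ∧ s = (1, 1) then g
  else 0

/-- Even half-step of the brickwork circuit: gates on pairs `(2j, 2j+1)`. -/
noncomputable def stepE (L : ℕ) (w : Fin 2 × Fin 2 → Fin 2 × Fin 2 → ℝ) :
    Matrix (ZMod (2 * L) → Fin 2) (ZMod (2 * L) → Fin 2) ℝ :=
  fun s' s => ∏ j ∈ Finset.range L,
    w (s' ((2 * j : ℕ) : ZMod (2 * L)), s' ((2 * j + 1 : ℕ) : ZMod (2 * L)))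
      (s ((2 * j : ℕ) : ZMod (2 * L)), s ((2 * j + 1 : ℕ) : ZMod (2 * L)))

/-- Odd half-step of the brickwork circuit: gates on pairs `(2j+1, 2j+2)`. -/
noncomputable def stepO (L : ℕ) (w : Fin 2 × Fin 2 → Fin 2 × Fin 2 → ℝ) :
    Matrix (ZMod (2 * L) → Fin 2) (ZMod (2 * L) → Fin 2) ℝ :=
  fun s' s => ∏ j ∈ Finset.range L,
    w (s' ((2 * j + 1 : ℕ) : ZMod (2 * L)), s' ((2 * j + 2 : ℕ) : ZMod (2 * L)))
      (s ((2 * j + 1 : ℕ) : ZMod (2 * L)), s ((2 * j + 2 : ℕ) : ZMod (2 * L)))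

/-- The brickwork transfer matrix `𝕋 = O · E`. -/
noncomputable def transferT (L : ℕ) [NeZero (2 * L)]
    (w : Fin 2 × Fin 2 → Fin 2 × Fin 2 → ℝ) :
    Matrix (ZMod (2 * L) → Fin 2) (ZMod (2 * L) → Fin 2) ℝ :=
  stepO L w * stepE L w

/-!
With `ε₁ = ε₂ = b = d = e = f = 0` each gate sends the basis pair `(x, y)` to `(y, x)` with a
weight `ω (x, y) ∈ {1, a, c, g}`, so `𝕋` is a weighted map matrix and `trace 𝕋^t` sums the
accumulated weights of the configurations fixed by `t` periods. Writing a configuration as its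
even sites `u` and odd sites `v`, functions on `ℤ/L`, one period moves `u` one cell left and `v`
one cell right. The fixed configurations are therefore the pairs of `t`-periodic, equivalently
`o`-periodic, functions, i.e. lifts of functions on `ℤ/o`. In `t` periods `u j` meets
`v (j + n)` for every `n < 2t`, so every pair of cells of `ℤ/o` meets `2κ` times, and the
weight is `a^(2κ n (o-m)) c^(2κ (o-n) m) g^(2κ n m)` when `u`, `v` have `n`, `m` occupied cells.
Counting the lifts with given `n` and `m` gives the binomial coefficients.
-/

open Finset Function

section WeightedMapMatrix
variable {n R : Type*} [DecidableEq n]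

def weightedMapMatrix [Zero R] (f : n → n) (w : n → R) : Matrix n n R :=
  Matrix.of fun i j => if i = f j then w j else 0

@[simp]
lemma weightedMapMatrix_apply [Zero R] (f : n → n) (w : n → R) (i j : n) :
    weightedMapMatrix f w i j = if i = f j then w j else 0 :=
  rfl

lemma weightedMapMatrix_mul [Fintype n] [NonUnitalNonAssocSemiring R] (f f' : n → n)
    (w w' : n → R) :
    weightedMapMatrix f w * weightedMapMatrix f' w' =
      weightedMapMatrix (f ∘ f') fun j => w (f' j) * w' j := by
  ext i j
  rw [Matrix.mul_apply, sum_eq_single (f' j) (fun k _ hk => by simp [hk]) (by simp)]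
  simp [ite_mul]

lemma weightedMapMatrix_pow [Fintype n] [CommSemiring R] (f : n → n) (w : n → R) (t : ℕ) :
    weightedMapMatrix f w ^ t =
      weightedMapMatrix f^[t] fun j => ∏ k ∈ range t, w (f^[k] j) := by
  induction t with
  | zero => ext i j; simp [Matrix.one_apply]
  | succ t ih =>
    rw [pow_succ, ih, weightedMapMatrix_mul, ← iterate_succ]
    congr 1
    funext j
    simp [prod_range_succ' _ t, iterate_succ_apply]

lemma trace_weightedMapMatrix [Fintype n] [AddCommMonoid R] (f : n → n) (w : n → R) :
    (weightedMapMatrix f w).trace = ∑ j, if f j = j then w j else 0 := by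
  simp [Matrix.trace, eq_comm]

end WeightedMapMatrix

lemma prod_range_natCast_zmod {M : Type*} [CommMonoid M] (n : ℕ) [NeZero n] (f : ZMod n → M) :
    ∏ j ∈ range n, f j = ∏ j, f j :=
  prod_nbij' (↑) ZMod.val (fun _ _ => mem_univ _) (fun j _ => mem_range.2 j.val_lt)
    (fun _ hj => ZMod.val_cast_of_lt (mem_range.1 hj)) (fun j _ => ZMod.natCast_zmod_val j)
    (fun _ _ => rfl)

lemma prod_range_two_mul {M : Type*} [CommMonoid M] (f : ℕ → M) (t : ℕ) :
    ∏ n ∈ range (2 * t), f n = ∏ k ∈ range t, f (2 * k) * f (2 * k + 1) := by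
  induction t with
  | zero => simp
  | succ t ih =>
    rw [Nat.mul_succ, prod_range_succ, prod_range_succ, ih, prod_range_succ, mul_assoc]

section Interleave
variable {L : ℕ} {β : Type*}

def evenSite (j : ZMod L) : ZMod (2 * L) := (2 * j.val : ℕ)

def evens (s : ZMod (2 * L) → β) (j : ZMod L) : β := s (evenSite j)

def odds (s : ZMod (2 * L) → β) (j : ZMod L) : β := s (evenSite j + 1)

def interleave (u v : ZMod L → β) (i : ZMod (2 * L)) : β :=
  if i.val % 2 = 0 then u (i.val / 2 : ℕ) else v (i.val / 2 : ℕ)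

lemma natCast_two_mul_eq_evenSite (n : ℕ) : ((2 * n : ℕ) : ZMod (2 * L)) = evenSite (n : ZMod L) :=
  (ZMod.natCast_eq_natCast_iff _ _ _).2 <| by
    rw [ZMod.val_natCast]; exact ((Nat.mod_modEq n L).mul_left' 2).symm

lemma natCast_two_mul_add_one_eq_evenSite_add_one (n : ℕ) :
    ((2 * n + 1 : ℕ) : ZMod (2 * L)) = evenSite (n : ZMod L) + 1 := by
  rw [Nat.cast_succ, natCast_two_mul_eq_evenSite]

variable [NeZero L]

lemma val_evenSite (j : ZMod L) : (evenSite j).val = 2 * j.val :=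
  ZMod.val_cast_of_lt (by have := j.val_lt; omega)

lemma val_evenSite_add_one (j : ZMod L) : (evenSite j + 1).val = 2 * j.val + 1 := by
  rw [evenSite, ← Nat.cast_succ]
  exact ZMod.val_cast_of_lt (by have := j.val_lt; omega)

@[simp]
lemma interleave_evenSite (u v : ZMod L → β) (j : ZMod L) : interleave u v (evenSite j) = u j := by
  simp [interleave, val_evenSite]

@[simp]
lemma interleave_evenSite_add_one (u v : ZMod L → β) (j : ZMod L) :
    interleave u v (evenSite j + 1) = v j := by
  have : (2 * j.val + 1) / 2 = j.val := by omega
  simp [interleave, val_evenSite_add_one, Nat.add_mod, this]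

@[simp]
lemma evens_interleave (u v : ZMod L → β) : evens (interleave u v) = u := by
  funext j; simp [evens]

@[simp]
lemma odds_interleave (u v : ZMod L → β) : odds (interleave u v) = v := by
  funext j; simp [odds]

lemma interleave_evens_odds (s : ZMod (2 * L) → β) : interleave (evens s) (odds s) = s := by
  funext i
  have hi : ((i.val : ℕ) : ZMod (2 * L)) = i := ZMod.natCast_zmod_val i
  rcases Nat.even_or_odd' i.val with ⟨k, hk | hk⟩
  · rw [← hi, hk, natCast_two_mul_eq_evenSite, interleave_evenSite, evens]
  · rw [← hi, hk, natCast_two_mul_add_one_eq_evenSite_add_one, interleave_evenSite_add_one, odds]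

lemma eq_interleave_iff {s : ZMod (2 * L) → β} {u v : ZMod L → β} :
    s = interleave u v ↔ evens s = u ∧ odds s = v := by
  constructor
  · rintro rfl; simp
  · rintro ⟨rfl, rfl⟩; exact (interleave_evens_odds s).symm

def interleaveEquiv : (ZMod L → β) × (ZMod L → β) ≃ (ZMod (2 * L) → β) where
  toFun p := interleave p.1 p.2
  invFun s := (evens s, odds s)
  left_inv p := by simp
  right_inv := interleave_evens_odds

lemma interleave_eq_interleave_iff {u v u' v' : ZMod L → β} :
    interleave u v = interleave u' v' ↔ u = u' ∧ v = v' := by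
  simp [eq_interleave_iff (s := interleave u v)]

end Interleave

section Brickwork
variable {L : ℕ} [NeZero L] {β R : Type*}

lemma stepE_apply (w : Fin 2 × Fin 2 → Fin 2 × Fin 2 → ℝ) (s' s : ZMod (2 * L) → Fin 2) :
    stepE L w s' s = ∏ j, w (evens s' j, odds s' j) (evens s j, odds s j) := by
  rw [stepE, ← prod_range_natCast_zmod]
  refine prod_congr rfl fun j _ => ?_
  simp only [evens, odds, natCast_two_mul_eq_evenSite, natCast_two_mul_add_one_eq_evenSite_add_one]

lemma stepO_apply (w : Fin 2 × Fin 2 → Fin 2 × Fin 2 → ℝ) (s' s : ZMod (2 * L) → Fin 2) :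
    stepO L w s' s = ∏ j, w (odds s' j, evens s' (j + 1)) (odds s j, evens s (j + 1)) := by
  rw [stepO, ← prod_range_natCast_zmod]
  refine prod_congr rfl fun j _ => ?_
  have h : ((2 * j + 2 : ℕ) : ZMod (2 * L)) = evenSite ((j : ZMod L) + 1) := by
    rw [← Nat.cast_succ, ← natCast_two_mul_eq_evenSite, Nat.mul_succ]
  simp only [evens, odds, natCast_two_mul_add_one_eq_evenSite_add_one, h]

def brickShift (s : ZMod (2 * L) → β) : ZMod (2 * L) → β :=
  interleave (fun j => evens s (j - 1)) fun j => odds s (j + 1)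

def brickWeight [CommMonoid R] (ω : β × β → R) (s : ZMod (2 * L) → β) : R :=
  ∏ j, ω (evens s j, odds s j) * ω (evens s j, odds s (j + 1))

lemma brickShift_iterate_interleave (u v : ZMod L → β) (k : ℕ) :
    brickShift^[k] (interleave u v) =
      interleave (fun j => u (j - (k : ZMod L))) fun j => v (j + (k : ZMod L)) := by
  induction k with
  | zero => simp
  | succ k ih =>
    rw [iterate_succ_apply', ih, brickShift, evens_interleave, odds_interleave]
    congr 1 <;> funext j <;> congr 1 <;> push_cast <;> ring

lemma prod_brickWeight_iterate [CommMonoid R] (ω : β × β → R) (u v : ZMod L → β) (t : ℕ) :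
    ∏ k ∈ range t, brickWeight ω (brickShift^[k] (interleave u v)) =
      ∏ n ∈ range (2 * t), ∏ j, ω (u j, v (j + n)) := by
  rw [prod_range_two_mul]
  refine prod_congr rfl fun k _ => ?_
  -- reindex `j ↦ j + k`: period `k` pairs `u j` with `v (j + 2k)` and `v (j + 2k + 1)`
  rw [brickShift_iterate_interleave, brickWeight, evens_interleave, odds_interleave,
    ← prod_mul_distrib]
  refine Fintype.prod_equiv (Equiv.subRight (k : ZMod L)) _ _ fun j => ?_
  simp only [Equiv.subRight_apply]
  congr 4 <;> push_cast <;> ring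

end Brickwork

def IsSwapGate (w : Fin 2 × Fin 2 → Fin 2 × Fin 2 → ℝ) (ω : Fin 2 × Fin 2 → ℝ) : Prop :=
  ∀ r s, w r s = if r = s.swap then ω s else 0

namespace IsSwapGate
variable {L : ℕ} [NeZero L] {w : Fin 2 × Fin 2 → Fin 2 × Fin 2 → ℝ} {ω : Fin 2 × Fin 2 → ℝ}

lemma prod_apply {ι : Type*} [Fintype ι] (hw : IsSwapGate w ω) (p q : ι → Fin 2 × Fin 2) :
    ∏ j, w (p j) (q j) = if ∀ j, p j = (q j).swap then ∏ j, ω (q j) else 0 := by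
  simp only [hw _, prod_ite_zero, mem_univ, forall_const]

lemma stepE_eq (hw : IsSwapGate w ω) :
    stepE L w = weightedMapMatrix (fun s => interleave (odds s) (evens s))
      fun s => ∏ j, ω (evens s j, odds s j) := by
  ext s' s
  simp only [stepE_apply, hw.prod_apply, weightedMapMatrix_apply, eq_interleave_iff]
  simp [Prod.ext_iff, funext_iff, forall_and]

lemma stepO_eq (hw : IsSwapGate w ω) :
    stepO L w = weightedMapMatrix
      (fun s => interleave (fun j => odds s (j - 1)) fun j => evens s (j + 1))
      fun s => ∏ j, ω (odds s j, evens s (j + 1)) := by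
  ext s' s
  have shift : (∀ j, evens s' (j + 1) = odds s j) ↔ ∀ j, evens s' j = odds s (j - 1) :=
    ⟨fun h j => by simpa using h (j - 1), fun h j => by simpa using h (j + 1)⟩
  simp only [stepO_apply, hw.prod_apply, weightedMapMatrix_apply, eq_interleave_iff]
  simp [Prod.ext_iff, funext_iff, forall_and, shift, and_comm]

variable [NeZero (2 * L)]

lemma transferT_eq (hw : IsSwapGate w ω) :
    transferT L w = weightedMapMatrix brickShift (brickWeight ω) := by
  rw [transferT, hw.stepO_eq, hw.stepE_eq, weightedMapMatrix_mul]
  congr 1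
  · funext s; simp [brickShift]
  · funext s; simp [brickWeight, prod_mul_distrib, mul_comm]

open Classical in
lemma trace_transferT_pow (hw : IsSwapGate w ω) (t : ℕ) :
    (transferT L w ^ t).trace = ∑ u : ZMod L → Fin 2, ∑ v : ZMod L → Fin 2,
      if Periodic u (t : ZMod L) ∧ Periodic v (t : ZMod L) then
        ∏ n ∈ range (2 * t), ∏ j, ω (u j, v (j + n))
      else 0 := by
  rw [hw.transferT_eq, weightedMapMatrix_pow, trace_weightedMapMatrix,
    ← interleaveEquiv.sum_comp, Fintype.sum_prod_type]
  refine sum_congr rfl fun u _ => sum_congr rfl fun v _ => ?_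
  have hfix : brickShift^[t] (interleave u v) = interleave u v ↔
      Periodic u (t : ZMod L) ∧ Periodic v (t : ZMod L) := by
    rw [brickShift_iterate_interleave, interleave_eq_interleave_iff, funext_iff, funext_iff]
    refine and_congr ⟨fun h j => ?_, fun h j => ?_⟩ Iff.rfl
    · simpa using (h (j + t)).symm
    · simpa using (h (j - t)).symm
  simp only [interleaveEquiv, Equiv.coe_fn_mk, hfix, prod_brickWeight_iterate]

end IsSwapGate

section Periodic
variable {L o : ℕ} {β M : Type*}

lemma periodic_natCast_iff_gcd (u : ZMod L → β) (t : ℕ) :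
    Periodic u (t : ZMod L) ↔ Periodic u (Nat.gcd t L : ZMod L) := by
  constructor
  · intro h
    have hgcd : ((Nat.gcd t L : ℕ) : ZMod L) = Nat.gcdA t L • (t : ZMod L) := by
      have := congrArg (Int.cast : ℤ → ZMod L) (Nat.gcd_eq_gcd_ab t L)
      push_cast [ZMod.natCast_self] at this
      rw [this, zsmul_eq_mul]
      ring
    rw [hgcd]
    exact h.zsmul _
  · intro h
    have ht : (t : ZMod L) = (t / Nat.gcd t L) • ((Nat.gcd t L : ℕ) : ZMod L) := by
      rw [nsmul_eq_mul, ← Nat.cast_mul, Nat.div_mul_cancel (Nat.gcd_dvd_left t L)]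
    rw [ht]
    exact h.nsmul _

variable [NeZero L]

lemma Function.Periodic.comp_val_comp_castHom {u : ZMod L → β} (hoL : o ∣ L)
    (hu : Periodic u (o : ZMod L)) :
    (fun r : ZMod o => u r.val) ∘ ZMod.castHom hoL (ZMod o) = u := by
  funext j
  simp only [Function.comp_apply, ZMod.castHom_apply, ZMod.cast_eq_val, ZMod.val_natCast]
  conv_rhs => rw [← ZMod.natCast_zmod_val j, ← Nat.mod_add_div j.val o]
  rw [Nat.cast_add, Nat.cast_mul, mul_comm, ← nsmul_eq_mul, hu.nsmul]

variable [NeZero o]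

open Classical in
lemma sum_ite_periodic_eq_sum_comp_castHom [Fintype β] [DecidableEq β] [AddCommMonoid M]
    (hoL : o ∣ L) (F : (ZMod L → β) → M) :
    ∑ u : ZMod L → β, (if Periodic u (o : ZMod L) then F u else 0) =
      ∑ x : ZMod o → β, F (x ∘ ZMod.castHom hoL (ZMod o)) := by
  rw [← sum_filter]
  refine sum_nbij' (fun u r => u r.val) (· ∘ ZMod.castHom hoL (ZMod o)) (fun _ _ => mem_univ _)
    (fun x _ => mem_filter.2 ⟨mem_univ _, fun j => ?_⟩)
    (fun u hu => (mem_filter.1 hu).2.comp_val_comp_castHom hoL)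
    (fun x _ => funext fun r => ?_)
    (fun u hu => by rw [(mem_filter.1 hu).2.comp_val_comp_castHom hoL])
  · simp only [Function.comp_apply, map_add, map_natCast, ZMod.natCast_self, add_zero]
  · simp only [Function.comp_apply, map_natCast, ZMod.natCast_zmod_val]

lemma prod_range_mul_natCast_zmod [CommMonoid M] (Q : ZMod o → M) (k : ℕ) :
    ∏ n ∈ range (k * o), Q n = (∏ γ, Q γ) ^ k := by
  induction k with
  | zero => simp
  | succ k ih =>
    rw [Nat.succ_mul, prod_range_add, ih, pow_succ, ← prod_range_natCast_zmod]
    congr 1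
    refine prod_congr rfl fun n _ => ?_
    simp

lemma prod_comp_castHom [CommMonoid M] (hoL : o ∣ L) (Q : ZMod o → M) :
    ∏ j : ZMod L, Q (ZMod.castHom hoL (ZMod o) j) = (∏ γ, Q γ) ^ (L / o) := by
  rw [← prod_range_natCast_zmod, ← prod_range_mul_natCast_zmod, Nat.div_mul_cancel hoL]
  simp

lemma prod_range_two_mul_comp_castHom [CommMonoid M] {t : ℕ} (hoL : o ∣ L) (hot : o ∣ t)
    (ω : β × β → M) (x y : ZMod o → β) :
    ∏ n ∈ range (2 * t), ∏ j : ZMod L,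
        ω ((x ∘ ZMod.castHom hoL (ZMod o)) j, (y ∘ ZMod.castHom hoL (ZMod o)) (j + n)) =
      (∏ r, ∏ s, ω (x r, y s)) ^ (2 * (t / o * (L / o))) := by
  have h2t : 2 * t = 2 * (t / o) * o := by rw [mul_assoc, Nat.div_mul_cancel hot]
  calc _ = ∏ n ∈ range (2 * t), (∏ r, ω (x r, y (r + n))) ^ (L / o) :=
        prod_congr rfl fun n _ => by
          rw [← prod_comp_castHom hoL fun r => ω (x r, y (r + n))]
          simp only [Function.comp_apply, map_add, map_natCast]
    _ = (∏ γ, ∏ r, ω (x r, y (r + γ))) ^ (2 * (t / o) * (L / o)) := by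
        rw [prod_pow, h2t, prod_range_mul_natCast_zmod fun γ => ∏ r, ω (x r, y (r + γ)),
          ← pow_mul]
    _ = _ := by
        rw [prod_comm, mul_assoc]
        congr 1
        exact prod_congr rfl fun r _ => Fintype.prod_equiv (Equiv.addLeft r) _ _ fun _ => rfl

end Periodic

section Counting
variable {ι M : Type*} [Fintype ι]

lemma prod_comp_fin_two [CommMonoid M] (x : ι → Fin 2) (F : Fin 2 → M) :
    ∏ i, F (x i) = F 0 ^ (Fintype.card ι - #{i | x i = 1}) * F 1 ^ #{i | x i = 1} := by
  have hcard := card_eq_sum_card_fiberwise (s := univ) (t := univ) (f := x) fun _ _ => mem_univ _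
  rw [Fin.sum_univ_two, card_univ] at hcard
  rw [← prod_fiberwise' univ x F, Fin.prod_univ_two, prod_const, prod_const, hcard,
    Nat.add_sub_cancel]

lemma sum_fin_two_eq_sum_choose [DecidableEq ι] [AddCommMonoid M] (G : ℕ → M) :
    ∑ x : ι → Fin 2, G #{i | x i = 1} =
      ∑ n ∈ range (Fintype.card ι + 1), (Fintype.card ι).choose n • G n := by
  rw [← card_univ, ← sum_powerset_apply_card, powerset_univ]
  refine sum_nbij' (fun x => ({i | x i = 1} : Finset ι)) (fun S i => if i ∈ S then 1 else 0)
    (fun _ _ => mem_univ _) (fun _ _ => mem_univ _) (fun x _ => funext fun i => ?_)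
    (fun S _ => by ext i; by_cases h : i ∈ S <;> simp [h]) (fun _ _ => rfl)
  by_cases h : x i = 1
  · simp [h]
  · simp [h]
    omega

lemma sum_sum_fin_two_eq_sum_sum_choose [DecidableEq ι] [AddCommMonoid M] (G : ℕ → ℕ → M) :
    ∑ x : ι → Fin 2, ∑ y : ι → Fin 2, G #{i | x i = 1} #{i | y i = 1} =
      ∑ n ∈ range (Fintype.card ι + 1), ∑ m ∈ range (Fintype.card ι + 1),
        (Fintype.card ι).choose n • (Fintype.card ι).choose m • G n m := by
  rw [sum_fin_two_eq_sum_choose fun n => ∑ y : ι → Fin 2, G n #{i | y i = 1}]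
  simp only [sum_fin_two_eq_sum_choose, smul_sum]

end Counting

def brickGateWeight (a c g : ℝ) (p : Fin 2 × Fin 2) : ℝ := ![![1, c], ![a, g]] p.1 p.2

lemma isSwapGate_gateW (a c g : ℝ) :
    IsSwapGate (gateW 0 0 a 0 c 0 0 0 g) (brickGateWeight a c g) := by
  rintro ⟨r₁, r₂⟩ ⟨s₁, s₂⟩
  fin_cases r₁ <;> fin_cases r₂ <;> fin_cases s₁ <;> fin_cases s₂ <;>
    simp [gateW, brickGateWeight, Prod.ext_iff]

lemma prod_prod_brickGateWeight {ι : Type*} [Fintype ι] (a c g : ℝ) (x y : ι → Fin 2) :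
    ∏ r, ∏ s, brickGateWeight a c g (x r, y s) =
      a ^ (#{i | x i = 1} * (Fintype.card ι - #{i | y i = 1})) *
        c ^ ((Fintype.card ι - #{i | x i = 1}) * #{i | y i = 1}) *
        g ^ (#{i | x i = 1} * #{i | y i = 1}) := by
  rw [prod_congr rfl fun r _ => prod_comp_fin_two y fun b => brickGateWeight a c g (x r, b),
    prod_comp_fin_two x fun b =>
      brickGateWeight a c g (b, 0) ^ _ * brickGateWeight a c g (b, 1) ^ _]
  simp [brickGateWeight, ← pow_mul, mul_pow]
  ring

theorem stmt17_general (L t : ℕ) [NeZero (2 * L)] (a c g : ℝ) :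
    Matrix.trace (transferT L (gateW 0 0 a 0 c 0 0 0 g) ^ t) =
      ∑ n ∈ Finset.range (Nat.gcd t L + 1), ∑ m ∈ Finset.range (Nat.gcd t L + 1),
        (Nat.choose (Nat.gcd t L) n : ℝ) * (Nat.choose (Nat.gcd t L) m : ℝ) *
          a ^ (2 * Nat.lcm t L * n - 2 * ((t / Nat.gcd t L) * (L / Nat.gcd t L)) * n * m) *
          c ^ (2 * Nat.lcm t L * m - 2 * ((t / Nat.gcd t L) * (L / Nat.gcd t L)) * n * m) *
          g ^ (2 * ((t / Nat.gcd t L) * (L / Nat.gcd t L)) * n * m) := by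
  classical
  have : NeZero L := ⟨right_ne_zero_of_mul (NeZero.ne (2 * L))⟩
  have : NeZero (Nat.gcd t L) := ⟨Nat.gcd_ne_zero_right (NeZero.ne L)⟩
  have hoL := Nat.gcd_dvd_right t L
  have hot := Nat.gcd_dvd_left t L
  have hper (u : ZMod L → Fin 2) := periodic_natCast_iff_gcd u t
  set o := Nat.gcd t L
  set κ := t / o * (L / o)
  have hℓ : Nat.lcm t L = κ * o := by
    rw [mul_assoc, Nat.div_mul_cancel hoL, Nat.lcm, Nat.div_mul_right_comm hot]
  rw [(isSwapGate_gateW a c g).trace_transferT_pow]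
  simp only [hper, ite_and, sum_ite_irrel, sum_const_zero, sum_ite_periodic_eq_sum_comp_castHom hoL,
    prod_range_two_mul_comp_castHom hoL hot, prod_prod_brickGateWeight, ZMod.card]
  rw [sum_sum_fin_two_eq_sum_sum_choose fun n m =>
      (a ^ (n * (o - m)) * c ^ ((o - n) * m) * g ^ (n * m)) ^ (2 * κ),
    ZMod.card]
  refine sum_congr rfl fun n _ => sum_congr rfl fun m _ => ?_
  have ha : 2 * (κ * o) * n - 2 * κ * n * m = n * (o - m) * (2 * κ) := by
    rw [Nat.mul_sub, Nat.sub_mul]; ring_nf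
  have hc : 2 * (κ * o) * m - 2 * κ * n * m = (o - n) * m * (2 * κ) := by
    rw [Nat.sub_mul, Nat.sub_mul]; ring_nf
  rw [hℓ, ha, hc, nsmul_eq_mul, nsmul_eq_mul, mul_pow, mul_pow, ← pow_mul, ← pow_mul, ← pow_mul]
  ring

/-- for gate parameters `ε₁ = ε₂ = b = d = e = f = 0`,
with `o = gcd(t, L)`, `ℓ = lcm(t, L)` and `κ = (t/o)(L/o)`,
`trace(𝕋^t) = Σ_{n,m=0}^{o} C(o,n) C(o,m) a^{2ℓn − 2κnm} c^{2ℓm − 2κnm} g^{2κnm}`. -/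
theorem stmt17 (L t : ℕ) [NeZero (2 * L)] (hL : 2 ≤ L) (ht : 1 ≤ t) (a c g : ℝ) :
    Matrix.trace (transferT L (gateW 0 0 a 0 c 0 0 0 g) ^ t) =
      ∑ n ∈ Finset.range (Nat.gcd t L + 1), ∑ m ∈ Finset.range (Nat.gcd t L + 1),
        (Nat.choose (Nat.gcd t L) n : ℝ) * (Nat.choose (Nat.gcd t L) m : ℝ) *
          a ^ (2 * Nat.lcm t L * n - 2 * ((t / Nat.gcd t L) * (L / Nat.gcd t L)) * n * m) *
          c ^ (2 * Nat.lcm t L * m - 2 * ((t / Nat.gcd t L) * (L / Nat.gcd t L)) * n * m) *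
          g ^ (2 * ((t / Nat.gcd t L) * (L / Nat.gcd t L)) * n * m) :=
  stmt17_general L t a c g
end

section
/- Let L ≥ 2 and t ≥ 1 be integers, and take gate parameters a = c = g = 1 and ε₁ = ε₂ = b = d = e = f = 0 in the brickwork transfer matrix construction (so each gate is the SWAP permutation of its two wires). Then trace(𝕋^t) = 4^{gcd(t, L)}. -/
open Matrix BigOperators

/-!
For the SWAP gate both layers permute the sites, the even one by `2j ↔ 2j+1` and the odd one
by `2j+1 ↔ 2j+2`. Hence `𝕋` is the matrix of `s ↦ s ∘ ρ` with `ρ = pairSwap L 0 ∘ pairSwap L 1`,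
and `trace (𝕋 ^ t)` counts the configurations fixed by `ρ^t`. Negating the odd sites turns the
two layers into the reflections `i ↦ -1 - i` and `i ↦ 1 - i`, so it conjugates `ρ` to the
translation by `-2`. A configuration invariant under translation by `2t` is a function on the
quotient of `ZMod (2L)` by the subgroup generated by `2t`, which has `gcd (2t, 2L) = 2 gcd (t, L)`
elements.
-/

open Function

section GraphMatrix

variable {n R : Type*} [DecidableEq n] [Semiring R]

def graphMatrix (F : n → n) : Matrix n n R :=
  of fun i j => if i = F j then 1 else 0

theorem graphMatrix_mul [Fintype n] (F G : n → n) :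
    (graphMatrix F * graphMatrix G : Matrix n n R) = graphMatrix (F ∘ G) := by
  ext i j
  simp [graphMatrix, mul_apply]

theorem graphMatrix_pow [Fintype n] (F : n → n) (k : ℕ) :
    (graphMatrix F ^ k : Matrix n n R) = graphMatrix F^[k] := by
  induction k with
  | zero => ext i j; rw [pow_zero, one_apply]; rfl
  | succ k ih => rw [pow_succ, ih, graphMatrix_mul, ← iterate_succ]

theorem trace_graphMatrix [Fintype n] (F : n → n) :
    trace (graphMatrix F : Matrix n n R) = Nat.card {i // F i = i} := by
  simp [trace, graphMatrix, Finset.sum_boole, eq_comm, Nat.card_eq_fintype_card,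
    Fintype.card_subtype]

end GraphMatrix

theorem precomp_iterate {ι β : Type*} (σ : ι → ι) (k : ℕ) :
    (fun s : ι → β => s ∘ σ)^[k] = fun s => s ∘ σ^[k] := by
  induction k with
  | zero => rfl
  | succ k ih => rw [iterate_succ, ih, iterate_succ']; rfl

theorem Function.Semiconj.card_comp_eq_self {ι κ β : Type*} {f : ι → ι} {g : κ → κ}
    (e : ι ≃ κ) (h : Semiconj e f g) :
    Nat.card {s : ι → β // s ∘ f = s} = Nat.card {s : κ → β // ∀ x, s (g x) = s x} := by
  refine Nat.card_congr ⟨fun s => ⟨s.1 ∘ e.symm, fun x => ?_⟩, fun s => ⟨s.1 ∘ e, ?_⟩,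
    fun s => by simp [comp_assoc], fun s => by simp [comp_assoc]⟩
  · rw [comp_apply, ← e.apply_symm_apply x, ← h, e.symm_apply_apply, comp_apply,
      e.symm_apply_apply]
    exact congrFun s.2 _
  · funext y
    exact (congrArg s.1 (h y)).trans (s.2 (e y))

theorem Nat.card_periodic {G β : Type*} [AddGroup G] [Finite G] (c : G) :
    Nat.card {u : G → β // Periodic u c} = Nat.card β ^ (AddSubgroup.zmultiples c).index := by
  let e : {u : G → β // Periodic u c} ≃ (G ⧸ AddSubgroup.zmultiples c → β) :=
    { toFun := fun u q => Quotient.liftOn' q u.1 fun a b hab => by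
        obtain ⟨k, hk⟩ :=
          AddSubgroup.mem_zmultiples_iff.mp (QuotientAddGroup.leftRel_apply.mp hab)
        rw [show b = a + k • c by rw [hk, add_neg_cancel_left], u.2.zsmul k]
      invFun := fun v => ⟨fun x => v x, fun x => by
        refine congrArg v (QuotientAddGroup.eq.mpr ?_)
        rw [neg_add_rev, neg_add_cancel_right]
        exact neg_mem (AddSubgroup.mem_zmultiples c)⟩
      left_inv := fun u => rfl
      right_inv := fun v => funext fun q => QuotientAddGroup.induction_on q fun _ => rfl }
  rw [Nat.card_congr e, Nat.card_fun, AddSubgroup.index]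

theorem ZMod.index_zmultiples_natCast (N a : ℕ) [NeZero N] :
    (AddSubgroup.zmultiples (a : ZMod N)).index = N.gcd a := by
  have h := (AddSubgroup.zmultiples (a : ZMod N)).index_mul_card
  rw [Nat.card_zmultiples, ZMod.addOrderOf_coe _ (NeZero.ne N), Nat.card_zmod] at h
  have hg : N / N.gcd a ≠ 0 := (Nat.div_pos (Nat.gcd_le_left a (NeZero.pos N))
    (Nat.gcd_pos_of_pos_left a (NeZero.pos N))).ne'
  rw [Nat.eq_div_of_mul_eq_left hg h, Nat.div_div_self (Nat.gcd_dvd_left N a) (NeZero.ne N)]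

theorem gateW_swap (r s : Fin 2 × Fin 2) :
    gateW 0 0 1 0 1 0 0 0 1 r s = if r = s.swap then 1 else 0 := by
  obtain ⟨r₁, r₂⟩ := r
  obtain ⟨s₁, s₂⟩ := s
  fin_cases r₁ <;> fin_cases r₂ <;> fin_cases s₁ <;> fin_cases s₂ <;> simp [gateW]

section Brickwork

variable (L : ℕ)

def siteParity : ZMod (2 * L) →+* ZMod 2 :=
  ZMod.castHom (dvd_mul_right 2 L) (ZMod 2)

def pairSwap (p : ZMod 2) (i : ZMod (2 * L)) : ZMod (2 * L) :=
  if siteParity L i = p then i + 1 else i - 1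

def negOdd (i : ZMod (2 * L)) : ZMod (2 * L) :=
  if siteParity L i = 0 then i else -i

theorem siteParity_two_mul (j : ZMod (2 * L)) : siteParity L (2 * j) = 0 := by
  rw [map_mul, map_ofNat]
  exact zero_mul _

theorem exists_eq_two_mul_add [NeZero (2 * L)] (o i : ZMod (2 * L)) :
    ∃ j < L, i = 2 * (j : ZMod (2 * L)) + o ∨ i = 2 * (j : ZMod (2 * L)) + o + 1 := by
  have hlt := ZMod.val_lt (i - o)
  have hval := ZMod.natCast_zmod_val (i - o)
  obtain ⟨j, hj | hj⟩ := Nat.even_or_odd' (i - o).val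
  · refine ⟨j, by omega, Or.inl ?_⟩
    rw [hj] at hval
    push_cast at hval
    linear_combination -hval
  · refine ⟨j, by omega, Or.inr ?_⟩
    rw [hj] at hval
    push_cast at hval
    linear_combination -hval

theorem pairSwap_two_mul_add (o j : ZMod (2 * L)) :
    pairSwap L (siteParity L o) (2 * j + o) = 2 * j + o + 1 := by
  simp [pairSwap, siteParity_two_mul]

theorem pairSwap_two_mul_add_add_one (o j : ZMod (2 * L)) :
    pairSwap L (siteParity L o) (2 * j + o + 1) = 2 * j + o := by
  simp [pairSwap, siteParity_two_mul]

theorem brick_swap_iff [NeZero (2 * L)] {β : Type*} (o : ZMod (2 * L))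
    (s' s : ZMod (2 * L) → β) :
    (∀ j ∈ Finset.range L,
        (s' (2 * j + o), s' (2 * j + o + 1)) = (s (2 * j + o + 1), s (2 * j + o))) ↔
      s' = s ∘ pairSwap L (siteParity L o) := by
  constructor
  · intro h
    funext i
    obtain ⟨j, hj, rfl | rfl⟩ := exists_eq_two_mul_add L o i
    · simpa [pairSwap_two_mul_add] using congrArg Prod.fst (h j (Finset.mem_range.2 hj))
    · simpa [pairSwap_two_mul_add_add_one] using congrArg Prod.snd (h j (Finset.mem_range.2 hj))
  · rintro rfl j -
    simp [pairSwap_two_mul_add, pairSwap_two_mul_add_add_one]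

theorem stepE_swap [NeZero (2 * L)] :
    stepE L (gateW 0 0 1 0 1 0 0 0 1) = graphMatrix (· ∘ pairSwap L 0) := by
  ext s' s
  simp only [stepE, graphMatrix, of_apply, gateW_swap, Prod.swap_prod_mk, Finset.prod_boole]
  refine if_congr ?_ rfl rfl
  push_cast
  simpa using brick_swap_iff L 0 s' s

theorem stepO_swap [NeZero (2 * L)] :
    stepO L (gateW 0 0 1 0 1 0 0 0 1) = graphMatrix (· ∘ pairSwap L 1) := by
  ext s' s
  simp only [stepO, graphMatrix, of_apply, gateW_swap, Prod.swap_prod_mk, Finset.prod_boole]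
  refine if_congr ?_ rfl rfl
  push_cast
  simpa [add_assoc, one_add_one_eq_two] using brick_swap_iff L 1 s' s

theorem siteParity_eq_zero_or_one (i : ZMod (2 * L)) :
    siteParity L i = 0 ∨ siteParity L i = 1 := by
  have key : ∀ p : ZMod 2, p = 0 ∨ p = 1 := by decide
  exact key _

theorem negOdd_involutive : Involutive (negOdd L) := by
  intro i
  rcases siteParity_eq_zero_or_one L i with h | h <;> simp [negOdd, h]

theorem semiconj_negOdd_brick :
    Semiconj (negOdd L) (pairSwap L 0 ∘ pairSwap L 1) (· + -2) := by
  intro i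
  rcases siteParity_eq_zero_or_one L i with h | h
  · have h₁ : siteParity L (i - 1) = 1 := by rw [map_sub, map_one, h]; decide
    have h₂ : siteParity L (i - 1 - 1) = 0 := by rw [map_sub, h₁, map_one, sub_self]
    simp only [negOdd, Function.comp_apply, pairSwap, h, h₁, h₂, zero_ne_one, one_ne_zero,
      ↓reduceIte]
    ring
  · have h₁ : siteParity L (i + 1) = 0 := by rw [map_add, map_one, h]; decide
    have h₂ : siteParity L (i + 1 + 1) = 1 := by rw [map_add, h₁, map_one, zero_add]
    simp only [negOdd, Function.comp_apply, pairSwap, h, h₁, h₂, one_ne_zero, ↓reduceIte]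
    ring

theorem transferT_swap [NeZero (2 * L)] :
    transferT L (gateW 0 0 1 0 1 0 0 0 1) =
      graphMatrix (· ∘ (pairSwap L 0 ∘ pairSwap L 1)) := by
  rw [transferT, stepO_swap, stepE_swap, graphMatrix_mul]
  rfl

end Brickwork

theorem stmt18_general (L t : ℕ) [NeZero (2 * L)] :
    Matrix.trace (transferT L (gateW 0 0 1 0 1 0 0 0 1) ^ t) =
      (4 : ℝ) ^ Nat.gcd t L := by
  calc trace (transferT L (gateW 0 0 1 0 1 0 0 0 1) ^ t)
      = Nat.card {s : ZMod (2 * L) → Fin 2 // s ∘ (pairSwap L 0 ∘ pairSwap L 1)^[t] = s} := by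
        rw [transferT_swap, graphMatrix_pow, precomp_iterate, trace_graphMatrix]
    _ = Nat.card {s : ZMod (2 * L) → Fin 2 // Periodic s (t • -2)} := by
        have h := (semiconj_negOdd_brick L).iterate_right t
        rw [add_right_iterate] at h
        exact congrArg Nat.cast (h.card_comp_eq_self (negOdd_involutive L).toPerm)
    _ = (4 : ℝ) ^ Nat.gcd t L := by
        have hshift : (t • -2 : ZMod (2 * L)) = -((2 * t : ℕ) : ZMod (2 * L)) := by
          rw [smul_neg, nsmul_eq_mul]; push_cast; ring
        rw [Nat.card_periodic, hshift, AddSubgroup.zmultiples_neg, ZMod.index_zmultiples_natCast,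
          Nat.gcd_mul_left, Nat.gcd_comm, Nat.card_eq_fintype_card, Fintype.card_fin]
        push_cast
        rw [pow_mul]
        norm_num

/-- for the SWAP gate (`a = c = g = 1`, all other parameters `0`),
`trace(𝕋^t) = 4^{gcd(t, L)}`. -/
theorem stmt18 (L t : ℕ) [NeZero (2 * L)] (hL : 2 ≤ L) (ht : 1 ≤ t) :
    Matrix.trace (transferT L (gateW 0 0 1 0 1 0 0 0 1) ^ t) =
      (4 : ℝ) ^ Nat.gcd t L :=
  stmt18_general L t
end
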